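/- arXiv:2210.15894 — 3 statements merged into one kernel-verified Lean document; each statement's English description precedes it below -/
import Mathlib

section
/- Let K, Q, N be positive integers with N = 2^{Q^K}, and let (a_n)_{n∈[N]} be a finite sequence of positive integers satisfying a_{n+K}/a_n > 2Q for all n with n + K ≤ N. Then there exist real numbers r_1, ..., r_K, pairwise disjoint index intervals J_i = (2^{i}, 2^{i+1}] ∩ [N] for i ∈ [Q^K] (up to a shift by a fixed N₁), and a measurable set E ⊆ 𝕋^K with Haar measure λ^{(K)}(E) ≤ 2K/Q, namely E = ∪_{k≤K} {x ∈ 𝕋^K : x_k mod 1 ∈ (0, 2/Q)}, such that for every x ∈ 𝕋^K there exists i ∈ [Q^K] with (1/#J_i) Σ_{n∈J_i} 1_E(x_1 + r_1 a_n, ..., x_K + r_K a_n) = 1. In particular, max_{i∈[Q^K]} (1/#J_i) Σ_{n∈J_i} 1_E(T^{a_n} x) = 1 for every x ∈ 𝕋^K, where T is the rotation of 𝕋^K by (r_1, ..., r_K). -/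
open MeasureTheory Filter

/-- The Haar–Lebesgue probability measure on the `K`-dimensional torus `𝕋^K`. -/
noncomputable def torusMeasure (K : ℕ) : Measure (Fin K → AddCircle (1 : ℝ)) :=
  Measure.pi fun _ => volume

/-- The "bad set" `E = ⋃_{k ≤ K} {x ∈ 𝕋^K : x k ∈ (0, 2/Q)}`. -/
def badSet (K Q : ℕ) : Set (Fin K → AddCircle (1 : ℝ)) :=
  ⋃ k : Fin K, {x | ∃ t : ℝ, t ∈ Set.Ioo (0 : ℝ) (2 / Q) ∧ x k = (t : AddCircle (1 : ℝ))}

/-- The index interval `J i = (2^{i-1}, 2^i] ∩ ℕ`. -/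
def Jint (i : ℕ) : Finset ℕ := Finset.Ioc (2 ^ (i - 1)) (2 ^ i)

section Auxiliary

open Set

/-- Step lemma: a long enough interval hits a translate of `(c, c+w)` mod 1. -/
lemma exists_point_aux (A D c w : ℝ) (hw : 0 < w) (hD0 : 0 < D) (hwD : 1 - w < D) :
    ∃ (p : ℝ) (m : ℤ), A ≤ p ∧ p ≤ A + D ∧ (m : ℝ) + c < p ∧ p < (m : ℝ) + c + w := by
  set m : ℤ := ⌊A - c⌋ with hm
  have h1 : (m : ℝ) ≤ A - c := Int.floor_le _
  have h2 : A - c < (m : ℝ) + 1 := Int.lt_floor_add_one _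
  by_cases h : A - c - (m : ℝ) < w
  · refine ⟨(A + min (A + D) ((m : ℝ) + c + w)) / 2, m, ?_, ?_, ?_, ?_⟩
    · have := lt_min (show A < A + D by linarith) (show A < (m : ℝ) + c + w by linarith)
      linarith
    · have := min_le_left (A + D) ((m : ℝ) + c + w); linarith
    · have := lt_min (show A < A + D by linarith) (show A < (m : ℝ) + c + w by linarith)
      linarith
    · have h3 := lt_min (show A < A + D by linarith) (show A < (m : ℝ) + c + w by linarith)
      have := min_le_right (A + D) ((m : ℝ) + c + w); linarith
  · push_neg at h
    set L : ℝ := (m : ℝ) + 1 + c with hL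
    have hLA : A < L := by simp [hL]; linarith
    have hLD : L < A + D := by simp [hL]; linarith
    refine ⟨(L + min (A + D) (L + w)) / 2, m + 1, ?_, ?_, ?_, ?_⟩
    · have := lt_min hLD (show L < L + w by linarith); linarith
    · have := min_le_left (A + D) (L + w); linarith
    · have h3 := lt_min hLD (show L < L + w by linarith)
      push_cast; simp only [hL] at h3 ⊢; linarith
    · have h3 := lt_min hLD (show L < L + w by linarith)
      have h4 := min_le_right (A + D) (L + w)
      push_cast; simp only [hL] at h3 h4 ⊢; linarith


lemma nested_intervals (Q : ℕ) (hQ : 0 < Q) (b e : ℕ → ℕ) :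
    ∀ M : ℕ, (∀ j, j ≤ M → 0 < b j) →
      (∀ j, j + 1 ≤ M → (2 * Q * b j : ℝ) < b (j + 1)) →
      ∃ α : ℝ, ∀ r : ℝ, α ≤ r → r ≤ α + 1 / (2 * Q * b M) →
        ∀ j, j ≤ M → ∃ m : ℤ,
          (m : ℝ) + e j / Q < r * b j ∧ r * b j < (m : ℝ) + (e j + 1) / Q := by
  have hQ' : (0 : ℝ) < Q := by exact_mod_cast hQ
  intro M
  induction M with
  | zero =>
    intro hb _
    have hb0 : (0 : ℝ) < b 0 := by exact_mod_cast hb 0 le_rfl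
    refine ⟨((e 0 : ℝ) + 1/4) / (Q * b 0), fun r hr1 hr2 j hj => ?_⟩
    interval_cases j
    refine ⟨0, ?_, ?_⟩
    · have h1 : ((e 0 : ℝ) + 1/4) / (Q * b 0) * b 0 = ((e 0 : ℝ) + 1/4) / Q := by
        field_simp
      have h2 : ((e 0 : ℝ) + 1/4) / (Q * b 0) * b 0 ≤ r * b 0 :=
        mul_le_mul_of_nonneg_right hr1 hb0.le
      have h3 : (e 0 : ℝ) / Q < ((e 0 : ℝ) + 1/4) / Q := by gcongr; linarith
      push_cast
      linarith
    · have h2 : r * b 0 ≤ (((e 0 : ℝ) + 1/4) / (Q * b 0) + 1 / (2 * Q * b 0)) * b 0 :=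
        mul_le_mul_of_nonneg_right hr2 hb0.le
      have h1 : (((e 0 : ℝ) + 1/4) / (Q * b 0) + 1 / (2 * Q * b 0)) * b 0
          = ((e 0 : ℝ) + 3/4) / Q := by field_simp; ring
      have h3 : ((e 0 : ℝ) + 3/4) / Q < ((e 0 : ℝ) + 1) / Q := by gcongr; linarith
      push_cast
      linarith
  | succ M ih =>
    intro hb hgap
    obtain ⟨α, hα⟩ := ih (fun j hj => hb j (hj.trans (Nat.le_succ M)))
      (fun j hj => hgap j (hj.trans (Nat.le_succ M)))
    have hbM : (0 : ℝ) < b M := by exact_mod_cast hb M (Nat.le_succ M)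
    have hbS : (0 : ℝ) < b (M + 1) := by exact_mod_cast hb (M + 1) le_rfl
    have hg : 2 * Q * b M < (b (M + 1) : ℝ) := hgap M le_rfl
    set D : ℝ := (1 / (2 * Q * b M) - 1 / (2 * Q * b (M + 1))) * b (M + 1) with hD
    have hDeq : D = (b (M + 1) : ℝ) / (2 * Q * b M) - 1 / (2 * Q) := by
      rw [hD]; field_simp
    have hD1 : 1 - 1 / (2 * Q) < D := by
      rw [hDeq]
      have : (1 : ℝ) < (b (M + 1) : ℝ) / (2 * Q * b M) := by
        rw [lt_div_iff₀ (by positivity)]; linarith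
      linarith
    have hw : (0 : ℝ) < 1 / (2 * Q) := by positivity
    have hwle : (1 : ℝ) / (2 * Q) ≤ 1 / 2 := by
      rw [div_le_div_iff₀ (by positivity) (by norm_num)]
      have : (1 : ℝ) ≤ Q := by exact_mod_cast hQ
      linarith
    have hD0 : (0 : ℝ) < D := by linarith
    obtain ⟨p, m, hp1, hp2, hp3, hp4⟩ :=
      exists_point_aux (α * b (M + 1)) D ((e (M + 1) : ℝ) / Q) (1 / (2 * Q)) hw hD0 hD1
    refine ⟨p / b (M + 1), fun r hr1 hr2 j hj => ?_⟩
    have hrb : p ≤ r * b (M + 1) := by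
      calc p = p / b (M + 1) * b (M + 1) := by field_simp
      _ ≤ r * b (M + 1) := mul_le_mul_of_nonneg_right hr1 hbS.le
    have hrb2 : r * b (M + 1) ≤ p + 1 / (2 * Q) := by
      calc r * b (M + 1) ≤ (p / b (M + 1) + 1 / (2 * Q * b (M + 1))) * b (M + 1) :=
            mul_le_mul_of_nonneg_right hr2 hbS.le
      _ = p + 1 / (2 * Q) := by field_simp
    rcases Nat.lt_or_ge j (M + 1) with hj' | hj'
    · -- old indices: r lies in the old interval
      refine hα r ?_ ?_ j (Nat.lt_succ_iff.mp hj')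
      · calc α = α * b (M + 1) / b (M + 1) := by field_simp
          _ ≤ p / b (M + 1) := by gcongr
          _ ≤ r := hr1
      · have hpAD : p / b (M + 1) ≤ α + 1 / (2 * Q * b M) - 1 / (2 * Q * b (M + 1)) := by
          rw [div_le_iff₀ hbS]
          calc p ≤ α * b (M + 1) + D := hp2
            _ = (α + 1 / (2 * Q * b M) - 1 / (2 * Q * b (M + 1))) * b (M + 1) := by
                rw [hD]; ring
        linarith
    · -- new index j = M + 1
      have hj'' : j = M + 1 := le_antisymm hj hj'
      subst hj''
      refine ⟨m, ?_, ?_⟩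
      · push_cast; push_cast at hp3; linarith
      · have : ((e (M + 1) : ℝ)) / Q + 1 / (2 * Q) + 1 / (2 * Q) = ((e (M + 1) : ℝ) + 1) / Q := by
          field_simp; ring
        push_cast; push_cast at hp4 this; linarith

lemma exists_rotation (Q : ℕ) (hQ : 0 < Q) (b e : ℕ → ℕ) (M : ℕ)
    (hb : ∀ j, j ≤ M → 0 < b j)
    (hgap : ∀ j, j + 1 ≤ M → (2 * Q * b j : ℝ) < b (j + 1)) :
    ∃ r : ℝ, ∀ j, j ≤ M → ∃ m : ℤ,
      (m : ℝ) + e j / Q < r * b j ∧ r * b j < (m : ℝ) + (e j + 1) / Q := by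
  obtain ⟨α, h⟩ := nested_intervals Q hQ b e M hb hgap
  exact ⟨α, h α le_rfl (le_add_of_nonneg_right (by positivity))⟩

lemma Jint_disjoint' {i j : ℕ} (hi : 1 ≤ i) (hj : 1 ≤ j) (hij : i < j) :
    Disjoint (Jint i) (Jint j) := by
  rw [Finset.disjoint_left]
  intro n hni hnj
  simp only [Jint, Finset.mem_Ioc] at hni hnj
  have h1 : 2 ^ i ≤ 2 ^ (j - 1) := Nat.pow_le_pow_right (by omega) (by omega)
  omega

lemma Jint_subset (Q K N : ℕ) (hN : N = 2 ^ (Q ^ K)) :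
    ∀ i ∈ Finset.Icc 1 (Q ^ K), Jint i ⊆ Finset.Icc 1 N := by
  intro i hi n hn
  simp only [Finset.mem_Icc] at hi ⊢
  simp only [Jint, Finset.mem_Ioc] at hn
  have h1 : 1 ≤ 2 ^ (i - 1) := Nat.one_le_two_pow
  have h2 : 2 ^ i ≤ 2 ^ (Q ^ K) := Nat.pow_le_pow_right (by omega) hi.2
  omega

end Auxiliary



lemma digit_lemma (Q : ℕ) (hQ : 0 < Q) :
    ∀ (K : ℕ) (g : ℕ → ℕ), (∀ k, k < K → g k < Q) →
      (∑ k ∈ Finset.range K, g k * Q ^ k) < Q ^ K ∧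
      ∀ j, j < K → (∑ k ∈ Finset.range K, g k * Q ^ k) / Q ^ j % Q = g j := by
  intro K
  induction K with
  | zero => intro g hg; simpa using hQ
  | succ K ih =>
    intro g hg
    have hsum : (∑ k ∈ Finset.range (K + 1), g k * Q ^ k)
        = g 0 + Q * ∑ k ∈ Finset.range K, g (k + 1) * Q ^ k := by
      rw [Finset.sum_range_succ']
      rw [Finset.mul_sum]
      simp only [pow_zero, mul_one]
      rw [add_comm]
      congr 1
      exact Finset.sum_congr rfl fun k _ => by ring
    obtain ⟨ihb, ihd⟩ := ih (fun k => g (k + 1)) (fun k hk => hg (k + 1) (by omega))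
    set T := ∑ k ∈ Finset.range K, g (k + 1) * Q ^ k with hT
    have hg0 : g 0 < Q := hg 0 (by omega)
    constructor
    · rw [hsum]
      calc g 0 + Q * T < Q + Q * T := by omega
        _ = Q * (T + 1) := by ring
        _ ≤ Q * Q ^ K := Nat.mul_le_mul_left Q (by omega)
        _ = Q ^ (K + 1) := by ring
    · intro j hj
      rw [hsum]
      cases j with
      | zero =>
        simp only [pow_zero, Nat.div_one]
        rw [Nat.add_mul_mod_self_left, Nat.mod_eq_of_lt hg0]
      | succ j' =>
        have h1 : (g 0 + Q * T) / Q ^ (j' + 1) = T / Q ^ j' := by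
          rw [pow_succ', ← Nat.div_div_eq_div_mul, Nat.add_mul_div_left _ _ hQ,
            Nat.div_eq_of_lt hg0, Nat.zero_add]
        rw [h1]
        exact ihd j' (by omega)

def sidx (K : ℕ) (κ : ℕ) : ℕ := if κ = 0 then K else κ

/-- index of the dyadic interval containing `n` -/
def idx (n : ℕ) : ℕ := Nat.log 2 (n - 1) + 1

lemma idx_eq {i n : ℕ} (hi : 1 ≤ i) (hn : n ∈ Jint i) : idx n = i := by
  simp only [Jint, Finset.mem_Ioc] at hn
  have h1 : 2 ^ (i - 1) ≤ n - 1 := by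
    have := Nat.one_le_two_pow (n := i - 1); omega
  have h2 : n - 1 < 2 ^ i := by
    have := hn.2; have := Nat.one_le_two_pow (n := i); omega
  have : Nat.log 2 (n - 1) = i - 1 := by
    rw [Nat.log_eq_iff (Or.inr ⟨one_lt_two, by have := Nat.one_le_two_pow (n := i - 1); omega⟩)]
    constructor
    · exact h1
    · have : i - 1 + 1 = i := by omega
      rw [this]; exact h2
  simp [idx, this]; omega




/-- the arc: image of `Ioo 0 c` in the circle -/
lemma arc_eq (c : ℝ) :
    {z : AddCircle (1 : ℝ) | ∃ t : ℝ, t ∈ Set.Ioo (0 : ℝ) c ∧ z = (t : AddCircle (1 : ℝ))}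
      = ((↑) : ℝ → AddCircle (1 : ℝ)) '' Set.Ioo 0 c := by
  ext z
  simp only [Set.mem_setOf_eq, Set.mem_image]
  exact ⟨fun ⟨t, ht, h⟩ => ⟨t, ht, h.symm⟩, fun ⟨t, ht, h⟩ => ⟨t, ht, h.symm⟩⟩

lemma arc_open (c : ℝ) : IsOpen (((↑) : ℝ → AddCircle (1 : ℝ)) '' Set.Ioo 0 c) :=
  QuotientAddGroup.isOpenMap_coe _ isOpen_Ioo

lemma arc_volume_le (c : ℝ) (hc : 0 < c) :
    volume (((↑) : ℝ → AddCircle (1 : ℝ)) '' Set.Ioo 0 c) ≤ ENNReal.ofReal c := by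
  rcases le_or_gt c 1 with hc1 | hc1
  · have hmeas : MeasurableSet (((↑) : ℝ → AddCircle (1 : ℝ)) '' Set.Ioo 0 c) :=
      (arc_open c).measurableSet
    rw [AddCircle.add_projection_respects_measure (T := (1:ℝ)) 0 hmeas]
    have heq : (QuotientAddGroup.mk ⁻¹' (((↑) : ℝ → AddCircle (1 : ℝ)) '' Set.Ioo 0 c))
        ∩ Set.Ioc (0:ℝ) (0 + 1) = Set.Ioo 0 c := by
      ext z
      simp only [Set.mem_inter_iff, Set.mem_preimage, Set.mem_image, Set.mem_Ioc, Set.mem_Ioo,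
        zero_add]
      constructor
      · rintro ⟨⟨t, ht, hzt⟩, hz1, hz2⟩
        have : ((z - t : ℝ) : AddCircle (1:ℝ)) = 0 := by
          rw [AddCircle.coe_sub, ← hzt, sub_self]
        rw [AddCircle.coe_eq_zero_iff] at this
        obtain ⟨n, hn⟩ := this
        have hn' : (n : ℝ) = z - t := by simpa using hn
        have hb1 : (-1 : ℝ) < (n : ℝ) := by rw [hn']; linarith [ht.2, ht.1]
        have hb2 : (n : ℝ) < 1 := by rw [hn']; linarith [ht.1]
        have hz0 : (-1 : ℤ) < n := by exact_mod_cast hb1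
        have hz1' : (n : ℤ) < 1 := by exact_mod_cast hb2
        have : n = 0 := by omega
        rw [this] at hn'
        have hzt' : z = t := by have := hn'.symm; push_cast at this; linarith
        rw [hzt']; exact ⟨ht.1, ht.2⟩
      · rintro ⟨hz1, hz2⟩
        exact ⟨⟨z, ⟨hz1, hz2⟩, rfl⟩, hz1, by linarith⟩
    rw [heq, Real.volume_Ioo]
    simp
  · calc volume (((↑) : ℝ → AddCircle (1 : ℝ)) '' Set.Ioo 0 c)
        ≤ volume (Set.univ : Set (AddCircle (1:ℝ))) := measure_mono (Set.subset_univ _)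
      _ = ENNReal.ofReal 1 := AddCircle.measure_univ 1
      _ ≤ ENNReal.ofReal c := ENNReal.ofReal_le_ofReal hc1.le

lemma badSet_measurable (K Q : ℕ) : MeasurableSet (badSet K Q) := by
  apply MeasurableSet.iUnion
  intro k
  have : {x : Fin K → AddCircle (1:ℝ) |
        ∃ t : ℝ, t ∈ Set.Ioo (0 : ℝ) (2 / Q) ∧ x k = (t : AddCircle (1 : ℝ))}
      = (fun x : Fin K → AddCircle (1:ℝ) => x k) ⁻¹'
        {z : AddCircle (1 : ℝ) | ∃ t : ℝ, t ∈ Set.Ioo (0 : ℝ) (2/Q) ∧ z = (t : AddCircle (1:ℝ))} := by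
    rfl
  rw [this, arc_eq]
  exact (measurable_pi_apply k) ((arc_open _).measurableSet)

lemma badSet_eq (K Q : ℕ) : badSet K Q
    = ⋃ k : Fin K, (fun x : Fin K → AddCircle (1:ℝ) => x k) ⁻¹'
        (((↑) : ℝ → AddCircle (1 : ℝ)) '' Set.Ioo 0 (2/Q)) := by
  unfold badSet
  apply Set.iUnion_congr
  intro k
  rw [← arc_eq]
  rfl

lemma badSet_measure_le (K Q : ℕ) (hK : 0 < K) (hQ : 0 < Q) :
    torusMeasure K (badSet K Q) ≤ ENNReal.ofReal (2 * K / Q) := by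
  classical
  have hc : (0:ℝ) < 2 / Q := by positivity
  have hone : ∀ k : Fin K, torusMeasure K
      ((fun x : Fin K → AddCircle (1:ℝ) => x k) ⁻¹'
        (((↑) : ℝ → AddCircle (1 : ℝ)) '' Set.Ioo 0 (2/Q))) ≤ ENNReal.ofReal (2 / Q) := by
    intro k
    rw [show ((fun x : Fin K → AddCircle (1:ℝ) => x k) ⁻¹'
        (((↑) : ℝ → AddCircle (1 : ℝ)) '' Set.Ioo 0 (2/Q)))
      = Set.pi Set.univ (Function.update (fun _ : Fin K => (Set.univ : Set (AddCircle (1:ℝ)))) k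
          (((↑) : ℝ → AddCircle (1 : ℝ)) '' Set.Ioo 0 (2/Q))) from Set.eval_preimage]
    rw [torusMeasure, Measure.pi_pi]
    calc ∏ j : Fin K, volume (Function.update (fun _ : Fin K => (Set.univ : Set (AddCircle (1:ℝ)))) k
          (((↑) : ℝ → AddCircle (1 : ℝ)) '' Set.Ioo 0 (2/Q)) j)
        ≤ ∏ j : Fin K, (if j = k then ENNReal.ofReal (2/Q) else 1) := by
          apply Finset.prod_le_prod' 
          intro j _
          rcases eq_or_ne j k with rfl | hjk
          · simp only [Function.update_self, if_pos rfl]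
            exact arc_volume_le _ hc
          · simp only [Function.update_of_ne hjk, if_neg hjk]
            rw [AddCircle.measure_univ]; simp
      _ = ENNReal.ofReal (2/Q) := by
          rw [Finset.prod_ite_eq' Finset.univ k (fun _ => ENNReal.ofReal (2/Q))]
          simp
  calc torusMeasure K (badSet K Q) ≤ ∑ k : Fin K, torusMeasure K
        ((fun x : Fin K → AddCircle (1:ℝ) => x k) ⁻¹'
          (((↑) : ℝ → AddCircle (1 : ℝ)) '' Set.Ioo 0 (2/Q))) := by
        rw [badSet_eq]
        refine le_trans (measure_iUnion_le _) ?_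
        rw [tsum_fintype]
    _ ≤ ∑ _k : Fin K, ENNReal.ofReal (2 / Q) := Finset.sum_le_sum (fun k _ => hone k)
    _ = K * ENNReal.ofReal (2 / Q) := by rw [Finset.sum_const]; simp [nsmul_eq_mul]
    _ = ENNReal.ofReal (2 * K / Q) := by
        rw [← ENNReal.ofReal_natCast K, ← ENNReal.ofReal_mul (by positivity)]
        congr 1
        ring



lemma int_coe_zero (m : ℤ) : (((m : ℝ)) : AddCircle (1 : ℝ)) = 0 :=
  (AddCircle.coe_eq_zero_iff (1 : ℝ)).mpr ⟨m, by simp⟩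

/-- choice of the fractional shift digit for a point of the circle -/
lemma frac_digit (Q : ℕ) (hQ : 0 < Q) (y : ℝ) :
    ∃ f : ℕ, f < Q ∧ ∃ m : ℤ,
      0 ≤ y + (f : ℝ) / Q - m ∧ y + (f : ℝ) / Q - m < 1 / Q := by
  have hQ' : (0 : ℝ) < Q := by exact_mod_cast hQ
  have hQz : (Q : ℤ) ≠ 0 := by exact_mod_cast hQ.ne'
  set u : ℝ := (Q : ℝ) * y with hu
  set F : ℤ := ⌊u⌋ with hF
  have hmod_nonneg : 0 ≤ (-F) % (Q : ℤ) := Int.emod_nonneg _ hQz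
  refine ⟨((-F) % (Q : ℤ)).toNat, ?_, ?_⟩
  · have := Int.emod_lt_of_pos (-F) (by exact_mod_cast hQ : (0:ℤ) < Q)
    omega
  · have key : y + ((((-F) % (Q : ℤ)).toNat : ℕ) : ℝ) / Q - ((-((-F) / (Q : ℤ)) : ℤ) : ℝ)
        = (u - F) / Q := by
      rw [show ((((-F) % (Q : ℤ)).toNat : ℕ) : ℝ) = (((-F) % (Q : ℤ) : ℤ) : ℝ) from by
        exact_mod_cast Int.toNat_of_nonneg hmod_nonneg]
      push_cast [Int.emod_def]
      field_simp
      ring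
    have h0 : (F : ℝ) ≤ u := Int.floor_le u
    have h1 : u < (F : ℝ) + 1 := Int.lt_floor_add_one u
    refine ⟨-((-F) / (Q : ℤ)), ?_, ?_⟩
    · rw [key]
      have : (0 : ℝ) ≤ u - F := by linarith
      positivity
    · rw [key]
      rw [div_lt_div_iff₀ hQ' hQ']
      nlinarith

lemma main_exists (K Q N : ℕ) (hK : 0 < K) (hQ : 0 < Q)
    (hN : N = 2 ^ (Q ^ K))
    (a : ℕ → ℕ) (hapos : ∀ n ∈ Finset.Icc 1 N, 0 < a n)
    (hgap : ∀ n : ℕ, 1 ≤ n → n + K ≤ N →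
      (2 * Q : ℝ) < (a (n + K) : ℝ) / (a n : ℝ)) :
    ∃ r : Fin K → ℝ, ∀ x : Fin K → AddCircle (1 : ℝ),
      ∃ i ∈ Finset.Icc 1 (Q ^ K), ∀ n ∈ Jint i,
        (fun k => x k + ((r k * (a n : ℝ) : ℝ) : AddCircle (1 : ℝ))) ∈ badSet K Q := by
  have hQ' : (0 : ℝ) < Q := by exact_mod_cast hQ
  rcases eq_or_lt_of_le (show 1 ≤ Q from hQ) with hQ1 | hQ2
  · -- the trivial case Q = 1
    refine ⟨fun _ => 0, fun x => ⟨1, ?_, fun n _ => ?_⟩⟩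
    · have : 0 < Q ^ K := pow_pos hQ K
      simp only [Finset.mem_Icc]
      omega
    · rw [badSet, Set.mem_iUnion]
      refine ⟨⟨0, hK⟩, ?_⟩
      obtain ⟨y, hy⟩ := QuotientAddGroup.mk_surjective (x ⟨0, hK⟩)
      refine ⟨Int.fract y + 1, ⟨?_, ?_⟩, ?_⟩
      · have := Int.fract_nonneg y; linarith
      · have := Int.fract_lt_one y
        have : ((Q : ℝ)) = 1 := by rw [← hQ1]; norm_num
        rw [this]; have := Int.fract_lt_one y; linarith
      · show x ⟨0, hK⟩ + ((0 * (a n : ℝ) : ℝ) : AddCircle (1 : ℝ)) = _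
        have h0 : ((0 * (a n : ℝ) : ℝ) : AddCircle (1 : ℝ)) = 0 := by norm_num
        have harg : Int.fract y + 1 = y + ((1 - ⌊y⌋ : ℤ) : ℝ) := by
          rw [Int.fract]; push_cast; ring
        rw [h0, add_zero, harg, AddCircle.coe_add, int_coe_zero, add_zero, ← hy]
  · -- the main case Q ≥ 2
    have hKN : K ≤ N := by
      have h1 : K < 2 ^ K := Nat.lt_two_pow_self
      have h2 : 2 ^ K ≤ Q ^ K := Nat.pow_le_pow_left hQ2 K
      have h3 : K ≤ Q ^ K := le_of_lt (lt_of_lt_of_le h1 h2)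
      have h4 : 2 ^ K ≤ 2 ^ (Q ^ K) := Nat.pow_le_pow_right (by omega) h3
      omega
    set M : ℕ → ℕ := fun κ => (N - sidx K κ) / K with hM
    set e : ℕ → ℕ → ℕ := fun κ j => (idx (sidx K κ + j * K) - 1) / Q ^ κ % Q with he
    have hs1 : ∀ κ, κ < K → 1 ≤ sidx K κ ∧ sidx K κ ≤ K := by
      intro κ hκ; unfold sidx; split <;> omega
    have hsub : ∀ κ, κ < K → ∀ j, j ≤ M κ → 1 ≤ sidx K κ + j * K ∧ sidx K κ + j * K ≤ N := by
      intro κ hκ j hj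
      obtain ⟨h1, h2⟩ := hs1 κ hκ
      have := (Nat.le_div_iff_mul_le hK).mp hj
      omega
    have hbpos : ∀ κ, κ < K → ∀ j, j ≤ M κ → 0 < a (sidx K κ + j * K) := by
      intro κ hκ j hj
      exact hapos _ (Finset.mem_Icc.mpr (hsub κ hκ j hj))
    have hbgap : ∀ κ, κ < K → ∀ j, j + 1 ≤ M κ →
        (2 * Q * a (sidx K κ + j * K) : ℝ) < a (sidx K κ + (j + 1) * K) := by
      intro κ hκ j hj
      obtain ⟨h1, h2⟩ := hsub κ hκ (j + 1) hj
      have h3 : (j + 1) * K = j * K + K := by ring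
      rw [h3] at h2
      have h4 : 1 ≤ sidx K κ + j * K := (hsub κ hκ j (by omega)).1
      have h5 := hgap (sidx K κ + j * K) h4 (by omega)
      have hi : sidx K κ + j * K + K = sidx K κ + (j + 1) * K := by ring
      rw [hi] at h5
      have h6 : (0 : ℝ) < a (sidx K κ + j * K) := by
        have := hapos (sidx K κ + j * K) (Finset.mem_Icc.mpr ⟨h4, by omega⟩)
        exact_mod_cast this
      rw [lt_div_iff₀ h6] at h5
      linarith
    have hex : ∀ k : Fin K, ∃ r : ℝ, ∀ j, j ≤ M k → ∃ m : ℤ,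
        (m : ℝ) + e (k : ℕ) j / Q < r * a (sidx K k + j * K) ∧
        r * a (sidx K k + j * K) < (m : ℝ) + (e (k : ℕ) j + 1) / Q :=
      fun k => exists_rotation Q hQ (fun j => a (sidx K k + j * K)) (e k) (M k)
        (hbpos k k.2) (hbgap k k.2)
    choose r hr using hex
    -- the key property of r at each admissible n
    have key : ∀ n, 2 ≤ n → n ≤ N → ∀ hκ : n % K < K, ∃ m : ℤ,
        (m : ℝ) + ((idx n - 1) / Q ^ (n % K) % Q : ℕ) / Q < r ⟨n % K, hκ⟩ * a n ∧
        r ⟨n % K, hκ⟩ * a n < (m : ℝ) + (((idx n - 1) / Q ^ (n % K) % Q : ℕ) + 1) / Q := by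
      intro n hn2 hnN hκ
      set κ := n % K with hκdef
      have hdm := Nat.div_add_mod n K
      have hsn : sidx K κ ≤ n ∧ K ∣ (n - sidx K κ) := by
        unfold sidx
        by_cases h0 : κ = 0
        · simp only [h0, if_pos rfl]
          have hdvd : K ∣ n := Nat.dvd_of_mod_eq_zero h0
          refine ⟨Nat.le_of_dvd (by omega) hdvd, ?_⟩
          exact Nat.dvd_sub hdvd dvd_rfl
        · simp only [if_neg h0]
          refine ⟨Nat.mod_le n K, ⟨n / K, by omega⟩⟩
      obtain ⟨hsn1, hdvd⟩ := hsn
      obtain ⟨j, hj⟩ := hdvd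
      have hjn : sidx K κ + j * K = n := by
        have h' : n - sidx K κ = K * j := hj
        have hcomm : K * j = j * K := Nat.mul_comm K j
        omega
      have hjM : j ≤ M κ := by
        rw [hM]
        apply (Nat.le_div_iff_mul_le hK).mpr
        omega
      obtain ⟨m, hm1, hm2⟩ := hr ⟨κ, hκ⟩ j hjM
      rw [hjn] at hm1 hm2
      have heκ : e κ j = (idx n - 1) / Q ^ κ % Q := by rw [he]; simp only; rw [hjn]
      rw [heκ] at hm1 hm2
      exact ⟨m, hm1, hm2⟩
    refine ⟨r, fun x => ?_⟩
    -- lift x to real coordinates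
    have hlift : ∀ k : Fin K, ∃ y : ℝ, (y : AddCircle (1:ℝ)) = x k :=
      fun k => QuotientAddGroup.mk_surjective (x k)
    choose y hy using hlift
    -- needed digits
    have hfd : ∀ k : Fin K, ∃ f : ℕ, f < Q ∧ ∃ m : ℤ,
        0 ≤ y k + (f : ℝ) / Q - m ∧ y k + (f : ℝ) / Q - m < 1 / Q :=
      fun k => frac_digit Q hQ (y k)
    choose f hf1 hf2 using hfd
    set g : ℕ → ℕ := fun j => if h : j < K then f ⟨j, h⟩ else 0 with hg
    have hglt : ∀ k, k < K → g k < Q := by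
      intro k hk; simp only [hg, dif_pos hk]; exact hf1 _
    obtain ⟨hSb, hSd⟩ := digit_lemma Q hQ K g hglt
    set S := ∑ k ∈ Finset.range K, g k * Q ^ k with hS
    refine ⟨S + 1, Finset.mem_Icc.mpr ⟨by omega, by omega⟩, fun n hn => ?_⟩
    have hn' := Finset.mem_Ioc.mp hn
    have hn2 : 2 ≤ n := by
      have := Nat.one_le_two_pow (n := S + 1 - 1); omega
    have hnN : n ≤ N := by
      have h1 : 2 ^ (S + 1) ≤ 2 ^ (Q ^ K) := Nat.pow_le_pow_right (by omega) (by omega)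
      omega
    have hidx : idx n = S + 1 := idx_eq (by omega) hn
    have hκ : n % K < K := Nat.mod_lt n hK
    obtain ⟨m2, hm1, hm2⟩ := key n hn2 hnN hκ
    set k : Fin K := ⟨n % K, hκ⟩ with hk
    have hdig : (idx n - 1) / Q ^ (n % K) % Q = f k := by
      rw [hidx]
      simp only [Nat.add_sub_cancel]
      rw [hSd (n % K) hκ]
      simp only [hg, dif_pos hκ]; rfl
    rw [hdig] at hm1 hm2
    obtain ⟨m1, hy1, hy2⟩ := hf2 k
    rw [badSet, Set.mem_iUnion]
    refine ⟨k, ?_⟩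
    set t : ℝ := y k + r k * a n - (m1 + m2) with ht
    have haux : ((f k : ℝ) + 1) / Q = (f k : ℝ) / Q + 1 / Q := by ring
    refine ⟨t, ⟨?_, ?_⟩, ?_⟩
    · rw [ht]; push_cast; linarith
    · rw [ht]; push_cast
      have h2Q : 1 / (Q:ℝ) + 1 / Q = 2 / Q := by ring
      rw [haux] at hm2
      linarith
    · show x k + ((r k * (a n : ℝ) : ℝ) : AddCircle (1 : ℝ)) = (t : AddCircle (1:ℝ))
      have harg : y k + r k * (a n : ℝ) = t + ((m1 + m2 : ℤ) : ℝ) := by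
        rw [ht]; push_cast; ring
      rw [← hy k, ← AddCircle.coe_add, harg, AddCircle.coe_add, int_coe_zero, add_zero]

/-- **The grid construction.**  Let `N = 2^{Q^K}` and let `(a n)_{n ∈ [N]}` satisfy
`a (n+K) / a n > 2Q` whenever `n + K ≤ N`.  Then there are rotation numbers
`r : Fin K → ℝ` such that, with the bad set `E = badSet K Q` (which is measurable and
of measure at most `2K/Q`) and the pairwise disjoint index intervals
`J i ⊆ [N]`, `i ∈ [Q^K]`, every point `x ∈ 𝕋^K` admits some `i ∈ [Q^K]` with
`(1/#(J i)) ∑_{n ∈ J i} 1_E(x + n·(r₁, …, r_K) · a n) = 1`; equivalently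
`max_{i ∈ [Q^K]} (1/#(J i)) ∑_{n ∈ J i} 1_E(T^{a n} x) = 1` for the rotation `T`
of `𝕋^K` by `(r₁, …, r_K)`. -/
theorem grid_construction (K Q N : ℕ) (hK : 0 < K) (hQ : 0 < Q) (hN0 : 0 < N)
    (hN : N = 2 ^ (Q ^ K))
    (a : ℕ → ℕ) (hapos : ∀ n ∈ Finset.Icc 1 N, 0 < a n)
    (hgap : ∀ n : ℕ, 1 ≤ n → n + K ≤ N →
      (2 * Q : ℝ) < (a (n + K) : ℝ) / (a n : ℝ)) :
    ∃ r : Fin K → ℝ,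
      MeasurableSet (badSet K Q) ∧
      torusMeasure K (badSet K Q) ≤ ENNReal.ofReal (2 * K / Q) ∧
      (∀ i ∈ Finset.Icc 1 (Q ^ K), ∀ j ∈ Finset.Icc 1 (Q ^ K), i ≠ j →
        Disjoint (Jint i) (Jint j)) ∧
      (∀ i ∈ Finset.Icc 1 (Q ^ K), Jint i ⊆ Finset.Icc 1 N) ∧
      ∀ x : Fin K → AddCircle (1 : ℝ),
        ∃ i ∈ Finset.Icc 1 (Q ^ K),
          ((Jint i).card : ℝ)⁻¹ *
            ∑ n ∈ Jint i,
              (badSet K Q).indicator (fun _ => (1 : ℝ))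
                (fun k => x k + ((r k * (a n : ℝ) : ℝ) : AddCircle (1 : ℝ))) = 1 := by
  obtain ⟨r, hr⟩ := main_exists K Q N hK hQ hN a hapos hgap
  refine ⟨r, badSet_measurable K Q, badSet_measure_le K Q hK hQ, ?_, Jint_subset Q K N hN, ?_⟩
  · intro i hi j hj hij
    simp only [Finset.mem_Icc] at hi hj
    rcases Nat.lt_or_ge i j with h | h
    · exact Jint_disjoint' hi.1 hj.1 h
    · exact (Jint_disjoint' hj.1 hi.1 (by omega)).symm
  · intro x
    obtain ⟨i, hi, hmem⟩ := hr x
    refine ⟨i, hi, ?_⟩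
    have hcard : (Jint i).card ≠ 0 := by
      have : (2 : ℕ) ^ i ∈ Jint i := by
        simp only [Jint, Finset.mem_Ioc]
        exact ⟨Nat.pow_lt_pow_right one_lt_two (by
          simp only [Finset.mem_Icc] at hi; omega), le_rfl⟩
      exact Finset.card_ne_zero_of_mem this
    have hsum : ∑ n ∈ Jint i,
        (badSet K Q).indicator (fun _ => (1 : ℝ))
          (fun k => x k + ((r k * (a n : ℝ) : ℝ) : AddCircle (1 : ℝ)))
        = ((Jint i).card : ℝ) := by
      rw [Finset.sum_congr rfl (fun n hn => Set.indicator_of_mem (hmem n hn) _)]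
      rw [Finset.sum_const, nsmul_eq_mul, mul_one]
    rw [hsum, inv_mul_cancel₀ (by exact_mod_cast hcard)]
end

section
/- Let A be an infinite set of positive integers and B ⊆ A an infinite subset such that lim_{t→∞} B(t)/A(t) = 1, where A(t) = #{n ∈ A : n ≤ t} and B(t) = #{n ∈ B : n ≤ t}. If the increasing enumeration of B is strong sweeping out, then the increasing enumeration of A is strong sweeping out. -/
open MeasureTheory Filter Finset

section AuxSSO

variable {p q : ℕ → Prop} [DecidablePred p] [DecidablePred q]


variable {p q : ℕ → Prop} [DecidablePred p] [DecidablePred q]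

lemma sum_range_nth (hp : (setOf p).Infinite) (g : ℕ → ℝ) (N : ℕ) :
    ∑ n ∈ Finset.range N, g (Nat.nth p n)
      = ∑ t ∈ (Finset.range (Nat.nth p N)).filter p, g t := by
  refine Finset.sum_nbij' (fun n => Nat.nth p n) (fun t => Nat.count p t) ?_ ?_ ?_ ?_ ?_
  · intro n hn
    simp only [Finset.mem_filter, Finset.mem_range] at *
    exact ⟨(Nat.nth_lt_nth hp).2 hn, Nat.nth_mem_of_infinite hp n⟩
  · intro t ht
    simp only [Finset.mem_filter, Finset.mem_range] at *
    have h1 : Nat.count p (t + 1) ≤ N := by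
      rw [Nat.count_le_iff_le_nth hp]; omega
    rw [Nat.count_succ] at h1
    simp [ht.2] at h1
    omega
  · intro n _; exact Nat.count_nth_of_infinite hp n
  · intro t ht
    simp only [Finset.mem_filter] at ht
    exact Nat.nth_count ht.2
  · intro n _; rfl

lemma sum_Icc_shift (f : ℕ → ℝ) (N : ℕ) :
    ∑ n ∈ Finset.Icc 1 N, f (n - 1) = ∑ n ∈ Finset.range N, f n := by
  refine Finset.sum_nbij' (fun n => n - 1) (fun n => n + 1) ?_ ?_ ?_ ?_ ?_
  · intro n hn; simp only [Finset.mem_Icc, Finset.mem_range] at *; omega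
  · intro n hn; simp only [Finset.mem_Icc, Finset.mem_range] at *; omega
  · intro n hn; simp only [Finset.mem_Icc] at hn; show n - 1 + 1 = n; omega
  · intro n _; show n + 1 - 1 = n; omega
  · intro n hn; simp only [Finset.mem_Icc] at hn; rfl

omit [DecidablePred p] in
lemma filter_q_eq (hq : (setOf q).Infinite)
    (N : ℕ) :
    (Finset.range (Nat.nth q (Nat.count q (Nat.nth p N)))).filter q
      = (Finset.range (Nat.nth p N)).filter q := by
  ext t
  simp only [Finset.mem_filter, Finset.mem_range]
  constructor
  · rintro ⟨h1, h2⟩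
    refine ⟨?_, h2⟩
    have h3 : Nat.nth q (Nat.count q t) < Nat.nth q (Nat.count q (Nat.nth p N)) := by
      rwa [Nat.nth_count h2]
    have h4 := (Nat.nth_lt_nth hq).1 h3
    have h5 := (Nat.lt_nth_iff_count_lt hq).1 h4
    rwa [Nat.nth_count h2] at h5
  · rintro ⟨h1, h2⟩
    refine ⟨?_, h2⟩
    have h3 : Nat.count q t < Nat.count q (Nat.nth p N) := by
      rw [Nat.lt_nth_iff_count_lt hq, Nat.nth_count h2]; exact h1
    calc t = Nat.nth q (Nat.count q t) := (Nat.nth_count h2).symm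
    _ < _ := (Nat.nth_lt_nth hq).2 h3

lemma count_le_count (hqp : ∀ t, q t → p t) (n : ℕ) : Nat.count q n ≤ Nat.count p n := by
  simp only [Nat.count_eq_card_filter_range]
  exact Finset.card_le_card (Finset.monotone_filter_right _ (fun t _ ht => hqp t ht))

lemma real_est (S S' M NR : ℝ) (h1 : 0 ≤ S') (h2 : S' ≤ S) (h3 : S ≤ NR)
    (h4 : S' ≤ M) (h5 : S - S' ≤ NR - M) (h6 : 1 ≤ M) (h7 : M ≤ NR) :
    |S / NR - S' / M| ≤ 1 - M / NR := by
  have hM : (0:ℝ) < M := by linarith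
  have hN : (0:ℝ) < NR := by linarith
  have key : |S * M - NR * S'| ≤ (NR - M) * M := by
    rw [abs_le]
    constructor
    · nlinarith [mul_le_mul_of_nonneg_right h4 (by linarith : (0:ℝ) ≤ NR - M),
        mul_nonneg (by linarith : (0:ℝ) ≤ S - S') hM.le]
    · nlinarith [mul_le_mul_of_nonneg_right h5 hM.le,
        mul_nonneg h1 (by linarith : (0:ℝ) ≤ NR - M)]
  rw [div_sub_div _ _ hN.ne' hM.ne', abs_div, abs_of_pos (mul_pos hN hM),
    div_le_iff₀ (mul_pos hN hM)]
  calc |S * M - NR * S'| ≤ (NR - M) * M := key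
    _ = (1 - M / NR) * (NR * M) := by field_simp

lemma avg_bounds (hp : (setOf p).Infinite) (g : ℕ → ℝ) (hg0 : ∀ k, 0 ≤ g k)
    (hg1 : ∀ k, g k ≤ 1) (N : ℕ) :
    0 ≤ (N : ℝ)⁻¹ * ∑ n ∈ Finset.Icc 1 N, g (Nat.nth p (n - 1)) ∧
      (N : ℝ)⁻¹ * ∑ n ∈ Finset.Icc 1 N, g (Nat.nth p (n - 1)) ≤ 1 := by
  have hS0 : 0 ≤ ∑ n ∈ Finset.Icc 1 N, g (Nat.nth p (n - 1)) :=
    Finset.sum_nonneg fun n _ => hg0 _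
  constructor
  · positivity
  · rcases Nat.eq_zero_or_pos N with h | h
    · simp [h]
    · have hS1 : ∑ n ∈ Finset.Icc 1 N, g (Nat.nth p (n - 1)) ≤ N := by
        calc ∑ n ∈ Finset.Icc 1 N, g (Nat.nth p (n - 1))
            ≤ ∑ n ∈ Finset.Icc 1 N, (1 : ℝ) := Finset.sum_le_sum fun n _ => hg1 _
          _ = N := by simp
      rw [inv_mul_le_iff₀ (by exact_mod_cast h), mul_one]
      exact hS1

lemma transfer (hp : (setOf p).Infinite) (hq : (setOf q).Infinite)
    (hqp : ∀ t, q t → p t)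
    (g : ℕ → ℝ) (hg0 : ∀ k, 0 ≤ g k) (hg1 : ∀ k, g k ≤ 1)
    (hM1 : Tendsto (fun N : ℕ => (Nat.count q (Nat.nth p N) : ℝ) / (N : ℝ)) atTop (nhds 1))
    (hsup : limsup (fun N : ℕ => (N : ℝ)⁻¹ * ∑ n ∈ Finset.Icc 1 N, g (Nat.nth q (n - 1))) atTop = 1)
    (hinf : liminf (fun N : ℕ => (N : ℝ)⁻¹ * ∑ n ∈ Finset.Icc 1 N, g (Nat.nth q (n - 1))) atTop = 0) :
    limsup (fun N : ℕ => (N : ℝ)⁻¹ * ∑ n ∈ Finset.Icc 1 N, g (Nat.nth p (n - 1))) atTop = 1 ∧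
    liminf (fun N : ℕ => (N : ℝ)⁻¹ * ∑ n ∈ Finset.Icc 1 N, g (Nat.nth p (n - 1))) atTop = 0 := by
  set u := fun N : ℕ => (N : ℝ)⁻¹ * ∑ n ∈ Finset.Icc 1 N, g (Nat.nth p (n - 1)) with hu
  set v := fun N : ℕ => (N : ℝ)⁻¹ * ∑ n ∈ Finset.Icc 1 N, g (Nat.nth q (n - 1)) with hv
  set M := fun N : ℕ => Nat.count q (Nat.nth p N) with hMdef
  -- rewrite u and v as sums over value-filters
  have hu' : ∀ N : ℕ, u N = (N : ℝ)⁻¹ * ∑ t ∈ (Finset.range (Nat.nth p N)).filter p, g t := by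
    intro N
    show (N : ℝ)⁻¹ * ∑ n ∈ Finset.Icc 1 N, g (Nat.nth p (n - 1)) = _
    rw [sum_Icc_shift (fun m => g (Nat.nth p m)) N, sum_range_nth hp g N]
  have hv' : ∀ N : ℕ, v N = (N : ℝ)⁻¹ * ∑ t ∈ (Finset.range (Nat.nth q N)).filter q, g t := by
    intro N
    show (N : ℝ)⁻¹ * ∑ n ∈ Finset.Icc 1 N, g (Nat.nth q (n - 1)) = _
    rw [sum_Icc_shift (fun m => g (Nat.nth q m)) N, sum_range_nth hq g N]
  have hvM : ∀ N : ℕ, v (M N) = (M N : ℝ)⁻¹ * ∑ t ∈ (Finset.range (Nat.nth p N)).filter q, g t := by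
    intro N
    rw [hv' (M N), hMdef, filter_q_eq hq N]
  have cardp : ∀ N : ℕ, ((Finset.range (Nat.nth p N)).filter p).card = N := by
    intro N
    rw [← Nat.count_eq_card_filter_range, Nat.count_nth_of_infinite hp]
  have cardq : ∀ N : ℕ, ((Finset.range (Nat.nth p N)).filter q).card = M N := by
    intro N
    rw [← Nat.count_eq_card_filter_range]
  have hMN : ∀ N : ℕ, M N ≤ N := by
    intro N
    calc M N ≤ Nat.count p (Nat.nth p N) := count_le_count hqp _
      _ = N := Nat.count_nth_of_infinite hp N
  -- the central estimate
  have est : ∀ N : ℕ, 1 ≤ N → 1 ≤ M N → |u N - v (M N)| ≤ 1 - (M N : ℝ) / N := by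
    intro N hN hMN1
    have hsub : (Finset.range (Nat.nth p N)).filter q ⊆ (Finset.range (Nat.nth p N)).filter p :=
      Finset.monotone_filter_right _ (fun t _ ht => hqp t ht)
    set S := ∑ t ∈ (Finset.range (Nat.nth p N)).filter p, g t with hS
    set S' := ∑ t ∈ (Finset.range (Nat.nth p N)).filter q, g t with hS'
    have h1 : 0 ≤ S' := Finset.sum_nonneg fun t _ => hg0 t
    have h2 : S' ≤ S := Finset.sum_le_sum_of_subset_of_nonneg hsub fun t _ _ => hg0 t
    have h3 : S ≤ (N : ℝ) := by
      calc S ≤ ∑ t ∈ (Finset.range (Nat.nth p N)).filter p, (1 : ℝ) :=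
          Finset.sum_le_sum fun t _ => hg1 t
        _ = (N : ℝ) := by rw [Finset.sum_const, cardp N]; simp
    have h4 : S' ≤ (M N : ℝ) := by
      calc S' ≤ ∑ t ∈ (Finset.range (Nat.nth p N)).filter q, (1 : ℝ) :=
          Finset.sum_le_sum fun t _ => hg1 t
        _ = (M N : ℝ) := by rw [Finset.sum_const, cardq N]; simp
    have h5 : S - S' ≤ (N : ℝ) - (M N : ℝ) := by
      have hdiff : S - S' = ∑ t ∈ (Finset.range (Nat.nth p N)).filter p \
          (Finset.range (Nat.nth p N)).filter q, g t := by
        rw [hS, hS', ← Finset.sum_sdiff hsub]; ring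
      rw [hdiff]
      calc _ ≤ ∑ t ∈ (Finset.range (Nat.nth p N)).filter p \
            (Finset.range (Nat.nth p N)).filter q, (1 : ℝ) :=
          Finset.sum_le_sum fun t _ => hg1 t
        _ = ((((Finset.range (Nat.nth p N)).filter p \
              (Finset.range (Nat.nth p N)).filter q).card : ℕ) : ℝ) := by
            rw [Finset.sum_const]; simp
        _ = (N : ℝ) - (M N : ℝ) := by
            rw [Finset.card_sdiff_of_subset hsub, cardp N, cardq N]
            have := hMN N
            push_cast [this]
            ring
    have h6 : (1 : ℝ) ≤ (M N : ℝ) := by exact_mod_cast hMN1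
    have h7 : (M N : ℝ) ≤ (N : ℝ) := by exact_mod_cast hMN N
    have hNpos : (0 : ℝ) < N := by exact_mod_cast hN
    have hMpos : (0 : ℝ) < (M N : ℝ) := by linarith
    have := real_est S S' (M N : ℝ) (N : ℝ) h1 h2 h3 h4 h5 h6 h7
    rw [hu' N, hvM N, inv_mul_eq_div, inv_mul_eq_div]
    exact this
  -- bounds
  have hubd : ∀ N, 0 ≤ u N ∧ u N ≤ 1 := fun N => avg_bounds hp g hg0 hg1 N
  have hvbd : ∀ N, 0 ≤ v N ∧ v N ≤ 1 := fun N => avg_bounds hq g hg0 hg1 N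
  have hu_ble : IsBoundedUnder (· ≤ ·) atTop u := isBoundedUnder_of ⟨1, fun N => (hubd N).2⟩
  have hu_bge : IsBoundedUnder (· ≥ ·) atTop u := isBoundedUnder_of ⟨0, fun N => (hubd N).1⟩
  have hv_ble : IsBoundedUnder (· ≤ ·) atTop v := isBoundedUnder_of ⟨1, fun N => (hvbd N).2⟩
  have hv_bge : IsBoundedUnder (· ≥ ·) atTop v := isBoundedUnder_of ⟨0, fun N => (hvbd N).1⟩
  -- eventual good behaviour of M
  have hev : ∀ δ : ℝ, 0 < δ → ∀ᶠ N : ℕ in atTop, 1 ≤ N ∧ 1 ≤ M N ∧ 1 - (M N : ℝ) / N ≤ δ := by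
    intro δ hδ
    have h1 : ∀ᶠ N : ℕ in atTop, (1 : ℝ) - δ/2 < (M N : ℝ) / N ∧ (0:ℝ) < (M N : ℝ) / N := by
      have e1 := hM1.eventually (eventually_gt_nhds (show (1:ℝ) - δ/2 < 1 by linarith))
      have e2 := hM1.eventually (eventually_gt_nhds (show (0:ℝ) < 1 by norm_num))
      filter_upwards [e1, e2] with N h1 h2 using ⟨h1, h2⟩
    filter_upwards [h1, eventually_ge_atTop 1] with N hN hN1
    refine ⟨hN1, ?_, by linarith [hN.1]⟩
    rcases Nat.eq_zero_or_pos (M N) with h0 | h0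
    · rw [h0] at hN
      norm_num at hN
    · exact h0
  -- surjectivity of M
  have surj : ∀ m : ℕ, M (Nat.count p (Nat.nth q m)) = m ∧ m ≤ Nat.count p (Nat.nth q m) := by
    intro m
    have hmem : p (Nat.nth q m) := hqp _ (Nat.nth_mem_of_infinite hq m)
    constructor
    · show Nat.count q (Nat.nth p (Nat.count p (Nat.nth q m))) = m
      rw [Nat.nth_count hmem, Nat.count_nth_of_infinite hq]
    · calc m = Nat.count q (Nat.nth q m) := (Nat.count_nth_of_infinite hq m).symm
        _ ≤ Nat.count p (Nat.nth q m) := count_le_count hqp _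
  -- frequently u is large
  have freq_high : ∀ c : ℝ, c < 1 → ∃ᶠ N in atTop, c ≤ u N := by
    intro c hc
    rw [frequently_atTop]
    intro N0
    set δ := 1 - c with hδdef
    have hδ : 0 < δ := by linarith
    obtain ⟨N1, hN1⟩ := eventually_atTop.1 (hev (δ/2) (by linarith))
    have hfv : ∃ᶠ m in atTop, 1 - δ/2 < v m :=
      frequently_lt_of_lt_limsup (hv_bge.isCoboundedUnder_le) (by rw [hsup]; linarith)
    obtain ⟨m, hm, hvm⟩ := frequently_atTop.1 hfv (max N0 N1)
    set N := Nat.count p (Nat.nth q m) with hNdef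
    obtain ⟨hMm, hmN⟩ := surj m
    have hNlarge : max N0 N1 ≤ N := le_trans hm hmN
    refine ⟨N, le_trans (le_max_left _ _) hNlarge, ?_⟩
    have h3 := hN1 N (le_trans (le_max_right _ _) hNlarge)
    have h4 := est N h3.1 h3.2.1
    rw [hMm] at h4
    have h5 := h3.2.2
    rw [hMm] at h5
    have := abs_le.1 h4
    linarith [this.1]
  -- frequently u is small
  have freq_low : ∀ c : ℝ, 0 < c → ∃ᶠ N in atTop, u N ≤ c := by
    intro c hc
    rw [frequently_atTop]
    intro N0
    obtain ⟨N1, hN1⟩ := eventually_atTop.1 (hev (c/2) (by linarith))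
    have hfv : ∃ᶠ m in atTop, v m < c/2 :=
      frequently_lt_of_liminf_lt (hv_ble.isCoboundedUnder_ge) (by rw [hinf]; linarith)
    obtain ⟨m, hm, hvm⟩ := frequently_atTop.1 hfv (max N0 N1)
    set N := Nat.count p (Nat.nth q m) with hNdef
    obtain ⟨hMm, hmN⟩ := surj m
    have hNlarge : max N0 N1 ≤ N := le_trans hm hmN
    refine ⟨N, le_trans (le_max_left _ _) hNlarge, ?_⟩
    have h3 := hN1 N (le_trans (le_max_right _ _) hNlarge)
    have h4 := est N h3.1 h3.2.1
    rw [hMm] at h4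
    have h5 := h3.2.2
    rw [hMm] at h5
    have := abs_le.1 h4
    linarith [this.2]
  constructor
  · refine le_antisymm ?_ ?_
    · exact limsup_le_of_le (hu_bge.isCoboundedUnder_le)
        (Eventually.of_forall fun N => (hubd N).2)
    · refine le_of_forall_lt fun c hc => ?_
      obtain ⟨c', hc1, hc2⟩ := exists_between hc
      exact lt_of_lt_of_le hc1 (le_limsup_of_frequently_le (freq_high c' hc2) hu_ble)
  · refine le_antisymm ?_ ?_
    · refine le_of_forall_pos_le_add fun ε hε => ?_
      rw [zero_add]
      exact liminf_le_of_frequently_le (freq_low ε hε) hu_bge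
    · exact le_liminf_of_le (hu_ble.isCoboundedUnder_ge)
        (Eventually.of_forall fun N => (hubd N).1)

lemma ncard_inter_Icc (S : Set ℕ) [DecidablePred (· ∈ S)] (h0 : 0 ∉ S) (t : ℕ) :
    (S ∩ Set.Icc 1 t).ncard = Nat.count (· ∈ S) (t + 1) := by
  have heq : S ∩ Set.Icc 1 t = ((Finset.range (t + 1)).filter (· ∈ S) : Finset ℕ) := by
    ext n
    simp only [Set.mem_inter_iff, Set.mem_Icc, Finset.coe_filter, Finset.mem_range,
      Set.mem_setOf_eq]
    constructor
    · rintro ⟨h1, _, h3⟩; exact ⟨by omega, h1⟩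
    · rintro ⟨h1, h2⟩
      refine ⟨h2, ?_, by omega⟩
      rcases Nat.eq_zero_or_pos n with h | h
      · exact absurd (h ▸ h2) h0
      · exact h
  rw [heq, Set.ncard_coe_finset, Nat.count_eq_card_filter_range]


end AuxSSO


/-- The (unweighted) ergodic average `(1/N) ∑_{n=1}^{N} 1_E(T^{a_n} x)`. -/
noncomputable def ergAvg {X : Type*} (T : X → X) (a : ℕ → ℕ) (E : Set X)
    (N : ℕ) (x : X) : ℝ :=
  (N : ℝ)⁻¹ * ∑ n ∈ Finset.Icc 1 N, E.indicator (fun _ => (1 : ℝ)) (T^[a n] x)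

/-- A sequence `(a n)` (indexed from `1`) is strong sweeping out. -/
def StrongSweepingOut (a : ℕ → ℕ) : Prop :=
  ∀ (X : Type) (_ : MeasurableSpace X) (μ : Measure X) (T : X → X),
    IsProbabilityMeasure μ → MeasurePreserving T μ μ →
    (∀ n : ℕ, 1 ≤ n → μ {x | T^[n] x = x} = 0) →
    ∀ ε : ℝ, 0 < ε →
      ∃ E : Set X, MeasurableSet E ∧ μ E < ENNReal.ofReal ε ∧
        ∀ᵐ x ∂μ,
          limsup (fun N => ergAvg T a E N x) atTop = 1 ∧
          liminf (fun N => ergAvg T a E N x) atTop = 0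

/-- If `B ⊆ A` are infinite sets of positive integers whose counting functions satisfy
`B(t)/A(t) → 1`, and the increasing enumeration of `B` is strong sweeping out, then so
is the increasing enumeration of `A`. -/
theorem strong_sweeping_out_of_dense_subsequence (A B : Set ℕ)
    (hA : A.Infinite) (hB : B.Infinite) (hBA : B ⊆ A) (hApos : ∀ n ∈ A, 0 < n)
    (hdens : Tendsto
      (fun t : ℕ => ((B ∩ Set.Icc 1 t).ncard : ℝ) / ((A ∩ Set.Icc 1 t).ncard : ℝ))
      atTop (nhds 1))
    (hSSO : StrongSweepingOut (fun n => Nat.nth (· ∈ B) (n - 1))) :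
    StrongSweepingOut (fun n => Nat.nth (· ∈ A) (n - 1)) := by
  classical
  intro X mX μ T hprob hmp haper ε hε
  obtain ⟨E, hEm, hEμ, hae⟩ := hSSO X mX μ T hprob hmp haper ε hε
  refine ⟨E, hEm, hEμ, ?_⟩
  have hp : (setOf (· ∈ A)).Infinite := by exact hA
  have hq : (setOf (· ∈ B)).Infinite := by exact hB
  have hApos0 : (0 : ℕ) ∉ A := fun h => absurd (hApos 0 h) (lt_irrefl 0)
  have hBpos0 : (0 : ℕ) ∉ B := fun h => hApos0 (hBA h)
  have hsubT : Tendsto (fun N : ℕ => Nat.nth (· ∈ A) N - 1) atTop atTop := by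
    apply tendsto_atTop_atTop.2
    intro b
    refine ⟨b + 1, fun N hN => ?_⟩
    have : N ≤ Nat.nth (· ∈ A) N := (Nat.nth_strictMono hp).le_apply
    omega
  have hkey : ∀ N : ℕ,
      ((B ∩ Set.Icc 1 (Nat.nth (· ∈ A) N - 1)).ncard : ℝ) /
        ((A ∩ Set.Icc 1 (Nat.nth (· ∈ A) N - 1)).ncard : ℝ)
      = (Nat.count (· ∈ B) (Nat.nth (· ∈ A) N) : ℝ) / (N : ℝ) := by
    intro N
    have h1 : 0 < Nat.nth (· ∈ A) N := hApos _ (Nat.nth_mem_of_infinite hp N)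
    have h2 : Nat.nth (· ∈ A) N - 1 + 1 = Nat.nth (· ∈ A) N := by omega
    rw [ncard_inter_Icc B hBpos0, ncard_inter_Icc A hApos0, h2,
      Nat.count_nth_of_infinite hp]
  have hM1 : Tendsto
      (fun N : ℕ => (Nat.count (· ∈ B) (Nat.nth (· ∈ A) N) : ℝ) / (N : ℝ))
      atTop (nhds 1) := Filter.Tendsto.congr hkey (hdens.comp hsubT)
  filter_upwards [hae] with x hx
  have hg0 : ∀ k : ℕ, 0 ≤ E.indicator (fun _ => (1 : ℝ)) (T^[k] x) := fun k =>
    Set.indicator_nonneg (fun _ _ => zero_le_one) _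
  have hg1 : ∀ k : ℕ, E.indicator (fun _ => (1 : ℝ)) (T^[k] x) ≤ 1 := by
    intro k
    rw [Set.indicator_apply]
    split <;> norm_num
  exact transfer hp hq (fun t ht => hBA ht)
    (fun k => E.indicator (fun _ => (1 : ℝ)) (T^[k] x)) hg0 hg1 hM1 hx.1 hx.2
end

section
/- Let η > 0, set σ_n = (log log log n)^{1-η}/n (for n large enough that this lies in (0,1], and with any fixed values in (0,1] for small n), let (Y_n) be independent {0,1}-valued random variables with P(Y_n = 1) = σ_n, and let A^ω be the random set of n with Y_n(ω) = 1. Let v_n = e^{n·(log log n)^{-1+η/2}} and I_n = [v_n, v_{n+1}) ∩ ℕ. Define D^ω = {d : d ∈ I_n ∩ A^ω for some n with I_{n+1} ∩ A^ω ≠ ∅} and E^ω = ∪_{n} {I_n ∩ A^ω : |I_n ∩ A^ω| > 1}. Then lim_{t→∞} E[D^ω(t)]/Σ_{n≤t} σ_n = 0 and lim_{t→∞} E[E^ω(t)]/Σ_{n≤t} σ_n = 0, where for a random set S, S(t) denotes #{m ∈ S : m ≤ t} and E denotes expectation. -/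
open MeasureTheory Filter

/-- The block `I n = [v n, v (n+1)) ∩ ℕ` of positive integers. -/
def blockI (v : ℕ → ℝ) (n : ℕ) : Set ℕ :=
  {m : ℕ | 0 < m ∧ v n ≤ (m : ℝ) ∧ (m : ℝ) < v (n + 1)}

/-- `D^ω`: elements of `A ∩ I n` for some `n` with `I (n+1) ∩ A ≠ ∅`. -/
def setD (v : ℕ → ℝ) (A : Set ℕ) : Set ℕ :=
  {d | ∃ n : ℕ, d ∈ blockI v n ∩ A ∧ (blockI v (n + 1) ∩ A).Nonempty}

/-- `E^ω`: union of the blocks `I n ∩ A` containing more than one element of `A`. -/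
def setE (v : ℕ → ℝ) (A : Set ℕ) : Set ℕ :=
  {m | ∃ n : ℕ, m ∈ blockI v n ∩ A ∧ 1 < (blockI v n ∩ A).ncard}

/-- `count S t` is the number of elements of `S` that are at most `t`. -/
noncomputable def count (S : Set ℕ) (t : ℕ) : ℕ := (S ∩ Set.Icc 1 t).ncard

open scoped Classical in
noncomputable def blkF (v : ℕ → ℝ) (n : ℕ) : Finset ℕ :=
  (Finset.range (⌈v (n+1)⌉₊)).filter (fun m => m ∈ blockI v n)

lemma mem_blkF {v : ℕ → ℝ} {n m : ℕ} : m ∈ blkF v n ↔ m ∈ blockI v n := by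
  classical
  constructor
  · intro h; exact (Finset.mem_filter.1 h).2
  · intro h
    refine Finset.mem_filter.2 ⟨Finset.mem_range.2 ?_, h⟩
    have h1 : (m : ℝ) < v (n+1) := h.2.2
    have h2 : v (n+1) ≤ (⌈v (n+1)⌉₊ : ℝ) := Nat.le_ceil _
    exact_mod_cast h1.trans_le h2

lemma blockI_eq_coe (v : ℕ → ℝ) (n : ℕ) : blockI v n = ↑(blkF v n) := by
  ext m; simp [mem_blkF]

lemma blockI_finite (v : ℕ → ℝ) (n : ℕ) : (blockI v n).Finite := by
  rw [blockI_eq_coe]; exact (blkF v n).finite_toSet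

/-- `1/x ≤ log x - log (x-1)` for `2 ≤ x`. -/
lemma inv_le_log_sub {x : ℝ} (hx : 2 ≤ x) : 1/x ≤ Real.log x - Real.log (x - 1) := by
  have hx1 : (0:ℝ) < x - 1 := by linarith
  have hx0 : (0:ℝ) < x := by linarith
  have h := Real.one_sub_inv_le_log_of_pos (x := x / (x-1)) (by positivity)
  rw [Real.log_div (by positivity) (by positivity)] at h
  have : (x / (x-1))⁻¹ = (x-1)/x := by field_simp
  rw [this] at h
  have : 1 - (x-1)/x = 1/x := by field_simp; ring
  linarith [h, this.symm.le]

/-- `log x - log (x-1) ≤ 1/(x-1)` for `1 < x`. -/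
lemma log_sub_le_inv {x : ℝ} (hx : 1 < x) : Real.log x - Real.log (x - 1) ≤ 1/(x-1) := by
  have hx1 : (0:ℝ) < x - 1 := by linarith
  have h := Real.log_le_sub_one_of_pos (x := x / (x-1)) (by positivity)
  rw [Real.log_div (by positivity) (by positivity)] at h
  have : x / (x-1) - 1 = 1/(x-1) := by field_simp; ring
  linarith

lemma log_le_two_sqrt {x : ℝ} (hx : 0 ≤ x) : Real.log x ≤ 2 * Real.sqrt x := by
  have h := Real.log_le_rpow_div hx (by norm_num : (0:ℝ) < 1/2)
  rw [← Real.sqrt_eq_rpow] at h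
  linarith

lemma sum_inv_Ico_le {M N : ℕ} (hM : 2 ≤ M) (hMN : M ≤ N) :
    ∑ m ∈ Finset.Ico M N, (1:ℝ)/m ≤ Real.log ((N:ℝ)-1) - Real.log ((M:ℝ)-1) := by
  have key : ∑ m ∈ Finset.Ico M N, (1:ℝ)/m
      ≤ ∑ i ∈ Finset.range (N - M), (Real.log ((M:ℝ) - 1 + ((i+1:ℕ):ℝ)) - Real.log ((M:ℝ) - 1 + (i:ℝ))) := by
    rw [Finset.sum_Ico_eq_sum_range]
    refine Finset.sum_le_sum fun i _ => ?_
    have h2 : (2:ℝ) ≤ (M:ℝ) + i := by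
      have : (2:ℝ) ≤ (M:ℝ) := by exact_mod_cast hM
      have : (0:ℝ) ≤ (i:ℝ) := by positivity
      linarith
    have := inv_le_log_sub h2
    have e1 : (M:ℝ) - 1 + (i+1) = (M:ℝ) + i := by ring
    have e2 : (M:ℝ) + i - 1 = (M:ℝ) - 1 + i := by ring
    push_cast
    rw [e1, ← e2]
    exact this
  rw [Finset.sum_range_sub (fun i => Real.log ((M:ℝ) - 1 + i))] at key
  have e3 : (M:ℝ) - 1 + ((N - M : ℕ):ℝ) = (N:ℝ) - 1 := by
    rw [Nat.cast_sub hMN]; ring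
  rw [e3] at key
  simpa using key


noncomputable def LL (n : ℕ) : ℝ := Real.log (Real.log n)
noncomputable def LLL (n : ℕ) : ℝ := Real.log (LL n)
noncomputable def cc (η : ℝ) (n : ℕ) : ℝ := (LL n) ^ (-(1:ℝ) + η/2)
noncomputable def lv (η : ℝ) (n : ℕ) : ℝ := n * cc η n

lemma log_sub_log_le {x y : ℝ} (hx : 0 < x) (hxy : x ≤ y) :
    Real.log y - Real.log x ≤ (y - x)/x := by
  have hy : 0 < y := lt_of_lt_of_le hx hxy
  have h := Real.log_le_sub_one_of_pos (x := y / x) (by positivity)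
  rw [Real.log_div hy.ne' hx.ne'] at h
  have : y / x - 1 = (y - x)/x := by field_simp
  linarith

lemma tendsto_logn : Tendsto (fun n : ℕ => Real.log n) atTop atTop :=
  Real.tendsto_log_atTop.comp tendsto_natCast_atTop_atTop

lemma tendsto_LL : Tendsto LL atTop atTop :=
  Real.tendsto_log_atTop.comp tendsto_logn

lemma tendsto_LLL : Tendsto LLL atTop atTop :=
  Real.tendsto_log_atTop.comp tendsto_LL

lemma tendsto_sqrt_atTop : Tendsto Real.sqrt atTop atTop := by
  have h := tendsto_rpow_atTop (y := 1/2) (by norm_num)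
  refine Tendsto.congr' ?_ h
  filter_upwards [eventually_ge_atTop (0:ℝ)] with x hx
  exact (Real.sqrt_eq_rpow x).symm

lemma tendsto_sqrt_log : Tendsto (fun n : ℕ => Real.sqrt (Real.log n)) atTop atTop :=
  tendsto_sqrt_atTop.comp tendsto_logn

lemma ev_base : ∀ᶠ n : ℕ in atTop, 1 ≤ Real.log n ∧ 2 ≤ LL n ∧ 1 ≤ LLL n ∧ 1 ≤ n := by
  filter_upwards [tendsto_logn.eventually_ge_atTop 1, tendsto_LL.eventually_ge_atTop 2,
    tendsto_LLL.eventually_ge_atTop 1, eventually_ge_atTop 1] with n h1 h2 h3 h4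
  exact ⟨h1, h2, h3, h4⟩

lemma ev_steps : ∀ᶠ n : ℕ in atTop,
    Real.log n ≤ Real.log (n+1) ∧ Real.log (n+1) - Real.log n ≤ 1/n ∧
    LL n ≤ LL (n+1) ∧ LL (n+1) ≤ LL n + 1 ∧
    LLL n ≤ LLL (n+1) ∧ ((n:ℝ)+1) * (LLL (n+1) - LLL n) ≤ 2/(Real.log n * LL n) := by
  filter_upwards [ev_base, (tendsto_add_atTop_nat 1).eventually ev_base] with n
    ⟨h1, h2, _, h4⟩ ⟨h1', h2', _, _⟩
  have hn1 : (1:ℝ) ≤ n := by exact_mod_cast h4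
  have hn0 : (0:ℝ) < n := by linarith
  have hcast : ((n+1 : ℕ):ℝ) = (n:ℝ) + 1 := by push_cast; ring
  have hlogpos : (0:ℝ) < Real.log n := by linarith
  have hLLpos : (0:ℝ) < LL n := by linarith
  -- step 1 : log
  have ha0 : Real.log n ≤ Real.log ((n:ℝ)+1) := Real.log_le_log hn0 (by linarith)
  have ha : Real.log ((n:ℝ)+1) - Real.log n ≤ 1/n := by
    have := log_sub_le_inv (x := (n:ℝ)+1) (by linarith)
    simpa using this
  -- step 2 : LL
  have hb0 : LL n ≤ LL (n+1) := by
    unfold LL; rw [hcast]; exact Real.log_le_log hlogpos ha0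
  have hb : LL (n+1) - LL n ≤ 1/((n:ℝ) * Real.log n) := by
    unfold LL; rw [hcast]
    have := log_sub_log_le hlogpos ha0
    have h2 : (Real.log ((n:ℝ)+1) - Real.log n) / Real.log n ≤ (1/n) / Real.log n := by
      exact div_le_div_of_nonneg_right ha hlogpos.le
    calc Real.log (Real.log ((n:ℝ)+1)) - Real.log (Real.log n)
        ≤ (Real.log ((n:ℝ)+1) - Real.log n) / Real.log n := this
      _ ≤ (1/n) / Real.log n := h2
      _ = 1/((n:ℝ) * Real.log n) := by field_simp
  have hb1 : LL (n+1) ≤ LL n + 1 := by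
    have : 1/((n:ℝ) * Real.log n) ≤ 1 := by
      rw [div_le_one (by positivity)]; nlinarith
    linarith
  -- step 3 : LLL
  have hc0 : LLL n ≤ LLL (n+1) := Real.log_le_log hLLpos hb0
  have hc : LLL (n+1) - LLL n ≤ 1/((n:ℝ) * Real.log n * LL n) := by
    have := log_sub_log_le hLLpos hb0
    calc LLL (n+1) - LLL n ≤ (LL (n+1) - LL n) / LL n := this
      _ ≤ (1/((n:ℝ) * Real.log n)) / LL n := by
          exact div_le_div_of_nonneg_right hb hLLpos.le
      _ = 1/((n:ℝ) * Real.log n * LL n) := by rw [div_div]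
  refine ⟨ha0, by simpa [hcast] using ha, hb0, hb1, hc0, ?_⟩
  have hcnonneg : 0 ≤ LLL (n+1) - LLL n := by linarith
  calc ((n:ℝ)+1) * (LLL (n+1) - LLL n) ≤ ((n:ℝ)+1) * (1/((n:ℝ) * Real.log n * LL n)) := by
        exact mul_le_mul_of_nonneg_left hc (by linarith)
    _ ≤ (2*(n:ℝ)) * (1/((n:ℝ) * Real.log n * LL n)) := by
        have : (0:ℝ) ≤ 1/((n:ℝ) * Real.log n * LL n) := by positivity
        nlinarith
    _ = 2/(Real.log n * LL n) := by field_simp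

lemma ev_cc (η : ℝ) : ∀ᶠ n : ℕ in atTop,
    cc η n = Real.exp ((-(1:ℝ) + η/2) * LLL n) ∧ 0 < cc η n := by
  filter_upwards [ev_base] with n ⟨h1, h2, h3, h4⟩
  have hLL : 0 < LL n := by linarith
  have he : cc η n = Real.exp ((-(1:ℝ) + η/2) * LLL n) := by
    unfold cc LLL; rw [Real.rpow_def_of_pos hLL, mul_comm]
  exact ⟨he, he ▸ Real.exp_pos _⟩

lemma ev_sqrt (η : ℝ) : ∀ᶠ n : ℕ in atTop,
    |(-(1:ℝ) + η/2) * LLL n| ≤ Real.log n / 2 ∧ Real.sqrt n ≤ lv η n := by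
  set p := -(1:ℝ) + η/2 with hp
  filter_upwards [ev_base, ev_cc η,
    tendsto_sqrt_log.eventually_ge_atTop (4 * |p| + 1)] with n ⟨h1, h2, h3, h4⟩ ⟨hcc, hccpos⟩ hs
  have hlogpos : (0:ℝ) < Real.log n := by linarith
  have hLLpos : (0:ℝ) < LL n := by linarith
  have hsq : Real.sqrt (Real.log n) * Real.sqrt (Real.log n) = Real.log n :=
    Real.mul_self_sqrt hlogpos.le
  have hLLL_le : LLL n ≤ LL n := Real.log_le_self hLLpos.le
  have hLL_le : LL n ≤ 2 * Real.sqrt (Real.log n) := log_le_two_sqrt hlogpos.le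
  have habs : |p * LLL n| ≤ Real.log n / 2 := by
    rw [abs_mul, abs_of_nonneg (by linarith : (0:ℝ) ≤ LLL n)]
    have h5 : |p| * LLL n ≤ |p| * (2 * Real.sqrt (Real.log n)) :=
      mul_le_mul_of_nonneg_left (hLLL_le.trans hLL_le) (abs_nonneg p)
    have h6 : |p| * (2 * Real.sqrt (Real.log n)) ≤ Real.log n / 2 := by
      nlinarith [Real.sqrt_nonneg (Real.log n), abs_nonneg p]
    linarith
  refine ⟨habs, ?_⟩
  have hn1 : (1:ℝ) ≤ n := by exact_mod_cast h4
  have hn0 : (0:ℝ) < n := by linarith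
  have hexp : Real.exp (-(Real.log n / 2)) = (Real.sqrt n)⁻¹ := by
    rw [← Real.log_sqrt hn0.le, Real.exp_neg, Real.exp_log (Real.sqrt_pos.2 hn0)]
  have hlow : Real.exp (-(Real.log n / 2)) ≤ Real.exp (p * LLL n) :=
    Real.exp_le_exp.2 (abs_le.1 habs).1
  have : lv η n = (n:ℝ) * Real.exp (p * LLL n) := by unfold lv; rw [hcc]
  rw [this]
  calc Real.sqrt n = (n:ℝ) * (Real.sqrt n)⁻¹ := by
        have hsn : Real.sqrt n ≠ 0 := (Real.sqrt_pos.2 hn0).ne'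
        field_simp
        exact Real.sq_sqrt hn0.le
    _ = (n:ℝ) * Real.exp (-(Real.log n / 2)) := by rw [hexp]
    _ ≤ (n:ℝ) * Real.exp (p * LLL n) := mul_le_mul_of_nonneg_left hlow hn0.le

lemma ev_llv (η : ℝ) : ∀ᶠ n : ℕ in atTop,
    0 < lv η n ∧ Real.log n / 2 ≤ Real.log (lv η n) ∧
    Real.log (lv η n) ≤ 3/2 * Real.log n ∧
    LL n - 1 ≤ Real.log (Real.log (lv η n)) ∧
    Real.log (Real.log (lv η n)) ≤ LL n + 1 := by
  filter_upwards [ev_base, ev_cc η, ev_sqrt η] with n ⟨h1, h2, h3, h4⟩ ⟨hcc, hccpos⟩ ⟨habs, hsqrt⟩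
  have hn0 : (0:ℝ) < n := by
    have : (1:ℝ) ≤ n := by exact_mod_cast h4
    linarith
  have hlvpos : 0 < lv η n := by unfold lv; positivity
  have hlogpos : (0:ℝ) < Real.log n := by linarith
  have hlog : Real.log (lv η n) = Real.log n + (-(1:ℝ)+η/2) * LLL n := by
    unfold lv; rw [hcc, Real.log_mul hn0.ne' (Real.exp_pos _).ne', Real.log_exp]
  have hup : Real.log (lv η n) ≤ 3/2 * Real.log n := by
    rw [hlog]; have := (abs_le.1 habs).2; linarith
  have hlo : Real.log n / 2 ≤ Real.log (lv η n) := by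
    rw [hlog]; have := (abs_le.1 habs).1; linarith
  refine ⟨hlvpos, hlo, hup, ?_, ?_⟩
  · have h2lo : Real.log (Real.log n / 2) ≤ Real.log (Real.log (lv η n)) :=
      Real.log_le_log (by positivity) hlo
    have : Real.log (Real.log n / 2) = LL n - Real.log 2 := by
      unfold LL; rw [Real.log_div hlogpos.ne' (by norm_num)]
    have hl2 : Real.log 2 ≤ 1 := by
      have := Real.log_le_sub_one_of_pos (x := (2:ℝ)) (by norm_num); linarith
    linarith
  · have h2up : Real.log (Real.log (lv η n)) ≤ Real.log (3/2 * Real.log n) :=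
      Real.log_le_log (by linarith) hup
    have : Real.log (3/2 * Real.log n) = Real.log (3/2) + LL n := by
      unfold LL; rw [Real.log_mul (by norm_num) hlogpos.ne']
    have hl32 : Real.log (3/2) ≤ 1 := by
      have := Real.log_le_sub_one_of_pos (x := (3/2:ℝ)) (by norm_num); linarith
    linarith

lemma exp_le_one_add_three {x : ℝ} (h0 : 0 ≤ x) (h1 : x ≤ 1) : Real.exp x ≤ 1 + 3*x := by
  have h2 : Real.exp x * (1 - x) ≤ 1 := by
    have ha := Real.add_one_le_exp (-x)
    calc Real.exp x * (1-x) ≤ Real.exp x * Real.exp (-x) :=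
          mul_le_mul_of_nonneg_left (by linarith) (Real.exp_pos x).le
      _ = 1 := by rw [← Real.exp_add]; simp
  have h3 : Real.exp x ≤ Real.exp 1 := Real.exp_le_exp.2 h1
  have h4 : Real.exp 1 ≤ 3 := by have := Real.exp_one_lt_d9; linarith
  nlinarith [Real.exp_pos x]

lemma ev_delta (η : ℝ) : ∀ᶠ n : ℕ in atTop,
    cc η n / 2 ≤ lv η (n+1) - lv η n ∧ lv η (n+1) - lv η n ≤ 2 * cc η n := by
  obtain ⟨p, hp⟩ : ∃ p : ℝ, p = -(1:ℝ) + η/2 := ⟨_, rfl⟩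
  have htop : Tendsto (fun n : ℕ => Real.log n * LL n) atTop atTop :=
    tendsto_logn.atTop_mul_atTop₀ tendsto_LL
  have hτ : Tendsto (fun n : ℕ => 2/(Real.log n * LL n)) atTop (nhds 0) :=
    tendsto_const_nhds.div_atTop htop
  have hsmall : ∀ᶠ n : ℕ in atTop, 2/(Real.log n * LL n) ≤ 1/(6*(|p|+1)) := by
    have hpos : (0:ℝ) < 1/(6*(|p|+1)) := by positivity
    exact hτ.eventually (eventually_le_nhds hpos)
  filter_upwards [ev_steps, ev_cc η, (tendsto_add_atTop_nat 1).eventually (ev_cc η),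
    hsmall, ev_base] with n ⟨hs1, hs2, hs3, hs4, hs5, hs6⟩ ⟨hcc, hccpos⟩ ⟨hcc', hccpos'⟩
    hsm ⟨h1, h2, h3, h4⟩
  rw [← hp] at hcc hcc'
  obtain ⟨u, hu⟩ : ∃ u : ℝ, u = LLL (n+1) - LLL n := ⟨_, rfl⟩
  rw [← hu] at hs6
  have hu0 : 0 ≤ u := by rw [hu]; linarith
  have hτpos : (0:ℝ) < Real.log n * LL n := by nlinarith
  have habsp : 0 ≤ |p| := abs_nonneg p
  have hpu : |p| * u ≤ 1/6 := by
    have h5 : u ≤ ((n:ℝ)+1) * u := by nlinarith [Nat.cast_nonneg (α := ℝ) n]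
    have h6 : u ≤ 1/(6*(|p|+1)) := by linarith
    have h8 : |p| * (1/(6*(|p|+1))) ≤ 1/6 := by
      rw [mul_one_div, div_le_div_iff₀ (by positivity) (by norm_num)]
      nlinarith
    nlinarith
  have hnpu : |p| * (((n:ℝ)+1) * u) ≤ 1/6 := by
    have h7 : |p| * (((n:ℝ)+1) * u) ≤ |p| * (1/(6*(|p|+1))) := by
      apply mul_le_mul_of_nonneg_left (le_trans hs6 hsm) habsp
    have h8 : |p| * (1/(6*(|p|+1))) ≤ 1/6 := by
      rw [mul_one_div, div_le_div_iff₀ (by positivity) (by norm_num)]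
      nlinarith
    linarith
  -- basic exponential bounds
  have hexpu_up : Real.exp (p * u) ≤ 1 + 3 * (|p| * u) := by
    have e1 : Real.exp (p * u) ≤ Real.exp (|p| * u) := by
      apply Real.exp_le_exp.2
      have : p * u ≤ |p| * u := mul_le_mul_of_nonneg_right (le_abs_self p) hu0
      linarith
    have e2 := exp_le_one_add_three (x := |p| * u) (by positivity) (by linarith)
    linarith
  have hexpu_lo : 1 - |p| * u ≤ Real.exp (p * u) := by
    have e1 : Real.exp (-(|p| * u)) ≤ Real.exp (p * u) := by
      apply Real.exp_le_exp.2
      have : -(|p| * u) ≤ p * u := by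
        have := mul_le_mul_of_nonneg_right (neg_abs_le p) hu0
        linarith
      linarith
    have e2 := Real.add_one_le_exp (-(|p| * u))
    linarith
  -- rewrite lv (n+1)
  have hlv' : lv η (n+1) = ((n:ℝ)+1) * (cc η n * Real.exp (p * u)) := by
    unfold lv
    rw [hcc', hcc, ← Real.exp_add]
    have : p * LLL n + p * u = p * LLL (n+1) := by rw [hu]; ring
    rw [this]
    push_cast; ring
  have hlvn : lv η n = (n:ℝ) * cc η n := rfl
  have hn0 : (0:ℝ) ≤ n := Nat.cast_nonneg n
  have hre : ((n:ℝ)+1) * (cc η n * Real.exp (p*u)) - (n:ℝ) * cc η n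
      = cc η n * (((n:ℝ)+1) * Real.exp (p*u) - n) := by ring
  constructor
  · rw [hlv', hlvn, hre]
    have hmul : ((n:ℝ)+1) * (1 - |p| * u) ≤ ((n:ℝ)+1) * Real.exp (p * u) :=
      mul_le_mul_of_nonneg_left hexpu_lo (by linarith)
    have e3 : ((n:ℝ)+1) * (1 - |p| * u) = ((n:ℝ)+1) - (|p| * (((n:ℝ)+1) * u)) := by ring
    have key : (1:ℝ)/2 ≤ ((n:ℝ)+1) * Real.exp (p * u) - n := by linarith
    calc cc η n / 2 = cc η n * (1/2) := by ring
      _ ≤ cc η n * (((n:ℝ)+1) * Real.exp (p*u) - n) :=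
          mul_le_mul_of_nonneg_left key hccpos.le
  · rw [hlv', hlvn, hre]
    have hmul : ((n:ℝ)+1) * Real.exp (p * u) ≤ ((n:ℝ)+1) * (1 + 3 * (|p| * u)) :=
      mul_le_mul_of_nonneg_left hexpu_up (by linarith)
    have e3 : ((n:ℝ)+1) * (1 + 3 * (|p| * u)) = ((n:ℝ)+1) + 3 * (|p| * (((n:ℝ)+1) * u)) := by
      ring
    have key : ((n:ℝ)+1) * Real.exp (p * u) - n ≤ 2 := by linarith
    calc cc η n * (((n:ℝ)+1) * Real.exp (p*u) - n) ≤ cc η n * 2 :=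
          mul_le_mul_of_nonneg_left key hccpos.le
      _ = 2 * cc η n := by ring

lemma rpow_window {x c q : ℝ} (hc : 2 ≤ c) (h1 : c - 1 ≤ x) (h2 : x ≤ c + 2) :
    x ^ q ≤ (2:ℝ)^|q| * c ^ q := by
  have hc0 : (0:ℝ) < c := by linarith
  rcases le_or_gt 0 q with hq | hq
  · have hx0 : (0:ℝ) ≤ x := by linarith
    have hx2 : x ≤ 2 * c := by linarith
    calc x ^ q ≤ (2*c) ^ q := Real.rpow_le_rpow hx0 hx2 hq
      _ = 2^q * c^q := Real.mul_rpow (by norm_num) hc0.le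
      _ ≤ 2^|q| * c^q := by
          have h3 : (2:ℝ)^q ≤ 2^|q| :=
            Real.rpow_le_rpow_of_exponent_le (by norm_num) (le_abs_self q)
          exact mul_le_mul_of_nonneg_right h3 (Real.rpow_nonneg hc0.le q)
  · have hx0 : (0:ℝ) < c/2 := by linarith
    have hcx : c/2 ≤ x := by linarith
    calc x ^ q ≤ (c/2) ^ q := Real.rpow_le_rpow_of_nonpos hx0 hcx hq.le
      _ = c^q * (2:ℝ)^(-q) := by
          rw [div_eq_mul_inv, Real.mul_rpow hc0.le (by norm_num),
            Real.inv_rpow (by norm_num), ← Real.rpow_neg (by norm_num)]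
      _ = 2^|q| * c^q := by rw [abs_of_neg hq]; ring

lemma blocksum_tendsto {η : ℝ} (hη : 0 < η) {σ : ℕ → ℝ}
    (hσmem : ∀ n, σ n ∈ Set.Ioc (0 : ℝ) 1)
    (hσ : ∀ᶠ n : ℕ in atTop,
      σ n = (Real.log (Real.log (Real.log n))) ^ ((1 : ℝ) - η) / n)
    {v : ℕ → ℝ} (hv : ∀ n : ℕ, v n = Real.exp (lv η n)) :
    Tendsto (fun n => ∑ m ∈ blkF v n, σ m) atTop (nhds 0) := by
  obtain ⟨M₀, hM₀⟩ := eventually_atTop.1 hσ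
  obtain ⟨K, hK⟩ : ∃ K : ℝ, K = (2:ℝ) ^ |(1:ℝ) - η| := ⟨_, rfl⟩
  have hKpos : 0 < K := hK ▸ Real.rpow_pos_of_pos (by norm_num) _
  have hexps : Tendsto (fun n : ℕ => Real.exp (Real.sqrt n)) atTop atTop :=
    Real.tendsto_exp_atTop.comp (tendsto_sqrt_atTop.comp tendsto_natCast_atTop_atTop)
  apply squeeze_zero'
    (g := fun n => 2*K * (LL n) ^ (-(η/2)) + 4*K * (Real.sqrt n * Real.exp (-Real.sqrt n)))
  · filter_upwards with n
    exact Finset.sum_nonneg fun m _ => (hσmem m).1.le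
  · filter_upwards [ev_base, ev_steps, ev_cc η, ev_delta η, ev_llv η,
      (tendsto_add_atTop_nat 1).eventually (ev_llv η), ev_sqrt η,
      hexps.eventually_ge_atTop ((M₀:ℝ) + 2)] with n
      ⟨h1, h2, h3, h4⟩ ⟨hs1, hs2, hs3, hs4, hs5, hs6⟩ ⟨hcc, hccpos⟩ ⟨hd1, hd2⟩
      ⟨hl1, hl2, hl3, hl4, hl5⟩ ⟨hl1', hl2', hl3', hl4', hl5'⟩ ⟨habs, hsq⟩ hM
    have hn0 : (0:ℝ) < n := by
      have : (1:ℝ) ≤ n := by exact_mod_cast h4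
      linarith
    have hsqn : (0:ℝ) ≤ Real.sqrt n := Real.sqrt_nonneg _
    have hvn : v n = Real.exp (lv η n) := hv n
    have hvn1 : v (n+1) = Real.exp (lv η (n+1)) := hv (n+1)
    have hvpos : 0 < v n := hvn ▸ Real.exp_pos _
    have hvpos1 : 0 < v (n+1) := hvn1 ▸ Real.exp_pos _
    have hvbig : (M₀:ℝ) + 2 ≤ v n := by
      rw [hvn]
      exact le_trans hM (Real.exp_le_exp.2 hsq)
    have hv2 : (2:ℝ) ≤ v n := by
      have : (0:ℝ) ≤ M₀ := Nat.cast_nonneg _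
      linarith
    have hvlt : v n ≤ v (n+1) := by
      rw [hvn, hvn1]
      exact Real.exp_le_exp.2 (by linarith)
    have hlogvn : Real.log (v n) = lv η n := by rw [hvn, Real.log_exp]
    have hlogvn1 : Real.log (v (n+1)) = lv η (n+1) := by rw [hvn1, Real.log_exp]
    -- the ceiling interval
    have hM2 : 2 ≤ ⌈v n⌉₊ := by
      have : (2:ℝ) ≤ (⌈v n⌉₊ : ℝ) := le_trans hv2 (Nat.le_ceil _)
      exact_mod_cast this
    have hMN : ⌈v n⌉₊ ≤ ⌈v (n+1)⌉₊ := Nat.ceil_le_ceil hvlt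
    -- step A : pointwise bound on σ m for m in the block
    have hA : ∀ m ∈ blkF v n, σ m ≤ (K * (LL n) ^ ((1:ℝ) - η)) * (1/(m:ℝ)) := by
      intro m hm
      obtain ⟨hm0, hmv, hmv'⟩ := mem_blkF.1 hm
      have hm0' : (0:ℝ) < m := by exact_mod_cast hm0
      have hmM₀ : M₀ ≤ m := by
        have : (M₀:ℝ) ≤ (m:ℝ) := by linarith
        exact_mod_cast this
      have hσm : σ m = (Real.log (Real.log (Real.log m))) ^ ((1 : ℝ) - η) / m := hM₀ m hmM₀
      -- bounds on log m
      have hlm1 : lv η n ≤ Real.log m := by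
        rw [← hlogvn]; exact Real.log_le_log hvpos hmv
      have hlm2 : Real.log m ≤ lv η (n+1) := by
        rw [← hlogvn1]; exact Real.log_le_log hm0' hmv'.le
      have hllm1 : Real.log (lv η n) ≤ Real.log (Real.log m) :=
        Real.log_le_log hl1 hlm1
      have hllm2 : Real.log (Real.log m) ≤ Real.log (lv η (n+1)) :=
        Real.log_le_log (lt_of_lt_of_le hl1 hlm1) hlm2
      have hlllm1 : Real.log (Real.log (lv η n)) ≤ Real.log (Real.log (Real.log m)) := by
        apply Real.log_le_log _ hllm1
        linarith
      have hlllm2 : Real.log (Real.log (Real.log m)) ≤ Real.log (Real.log (lv η (n+1))) := by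
        apply Real.log_le_log _ hllm2
        have : 0 < Real.log (lv η n) := by linarith
        linarith
      -- window : LLL m ∈ [LL n - 1, LL n + 2]
      have hw1 : LL n - 1 ≤ Real.log (Real.log (Real.log m)) := le_trans hl4 hlllm1
      have hw2 : Real.log (Real.log (Real.log m)) ≤ LL n + 2 := by
        have : Real.log (Real.log (lv η (n+1))) ≤ LL (n+1) + 1 := hl5'
        linarith
      have hrp : (Real.log (Real.log (Real.log m))) ^ ((1:ℝ) - η)
          ≤ K * (LL n) ^ ((1:ℝ) - η) := by
        rw [hK]
        exact rpow_window h2 hw1 hw2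
      rw [hσm, div_eq_mul_one_div]
      apply mul_le_mul_of_nonneg_right hrp
      positivity
    -- step B+C : sum bound
    have hB : ∑ m ∈ blkF v n, σ m
        ≤ (K * (LL n) ^ ((1:ℝ) - η)) * ∑ m ∈ Finset.Ico ⌈v n⌉₊ ⌈v (n+1)⌉₊, (1/(m:ℝ)) := by
      calc ∑ m ∈ blkF v n, σ m ≤ ∑ m ∈ blkF v n, (K * (LL n) ^ ((1:ℝ) - η)) * (1/(m:ℝ)) :=
            Finset.sum_le_sum hA
        _ ≤ ∑ m ∈ Finset.Ico ⌈v n⌉₊ ⌈v (n+1)⌉₊, (K * (LL n) ^ ((1:ℝ) - η)) * (1/(m:ℝ)) := by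
            apply Finset.sum_le_sum_of_subset_of_nonneg
            · intro m hm
              obtain ⟨hm0, hmv, hmv'⟩ := mem_blkF.1 hm
              refine Finset.mem_Ico.2 ⟨Nat.ceil_le.2 hmv, ?_⟩
              have : (m:ℝ) < (⌈v (n+1)⌉₊ : ℝ) := lt_of_lt_of_le hmv' (Nat.le_ceil _)
              exact_mod_cast this
            · intro m _ _
              have hK2 : 0 ≤ K * (LL n) ^ ((1:ℝ) - η) := by positivity
              positivity
        _ = (K * (LL n) ^ ((1:ℝ) - η)) * ∑ m ∈ Finset.Ico ⌈v n⌉₊ ⌈v (n+1)⌉₊, (1/(m:ℝ)) := by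
            rw [Finset.mul_sum]
    -- harmonic estimate
    have hH : ∑ m ∈ Finset.Ico ⌈v n⌉₊ ⌈v (n+1)⌉₊, (1/(m:ℝ))
        ≤ 2 * cc η n + 2 * Real.exp (-Real.sqrt n) := by
      have h5 := sum_inv_Ico_le hM2 hMN
      have hub : Real.log ((⌈v (n+1)⌉₊:ℝ) - 1) ≤ lv η (n+1) := by
        rw [← hlogvn1]
        apply Real.log_le_log
        · have : (2:ℝ) ≤ (⌈v n⌉₊:ℝ) := by exact_mod_cast hM2
          have : (2:ℝ) ≤ (⌈v (n+1)⌉₊:ℝ) := by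
            have := hMN; exact_mod_cast le_trans hM2 this
          linarith
        · have := Nat.ceil_lt_add_one hvpos1.le
          linarith
      have hlb : lv η n - 2 * Real.exp (-Real.sqrt n) ≤ Real.log ((⌈v n⌉₊:ℝ) - 1) := by
        have h6 : Real.log (v n - 1) ≤ Real.log ((⌈v n⌉₊:ℝ) - 1) := by
          apply Real.log_le_log (by linarith)
          have := Nat.le_ceil (v n)
          linarith
        have h7 : Real.log (v n) - Real.log (v n - 1) ≤ 1/(v n - 1) := log_sub_le_inv (by linarith)
        have h8 : 1/(v n - 1) ≤ 2/(v n) := by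
          rw [div_le_div_iff₀ (by linarith) (by linarith)]
          linarith
        have h9 : 2/(v n) ≤ 2 * Real.exp (-Real.sqrt n) := by
          have hlv9 : Real.exp (Real.sqrt n) ≤ v n := by
            rw [hvn]; exact Real.exp_le_exp.2 hsq
          rw [Real.exp_neg, ← div_eq_mul_inv]
          exact div_le_div_of_nonneg_left (by norm_num) (Real.exp_pos _) hlv9
        linarith [h6, h7, h8, h9, hlogvn]
      calc ∑ m ∈ Finset.Ico ⌈v n⌉₊ ⌈v (n+1)⌉₊, (1/(m:ℝ))
          ≤ Real.log ((⌈v (n+1)⌉₊:ℝ) - 1) - Real.log ((⌈v n⌉₊:ℝ) - 1) := h5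
        _ ≤ lv η (n+1) - (lv η n - 2 * Real.exp (-Real.sqrt n)) := by linarith
        _ ≤ 2 * cc η n + 2 * Real.exp (-Real.sqrt n) := by linarith
    -- put together
    have hLL1 : (1:ℝ) ≤ LL n := by linarith
    have hLLpos : (0:ℝ) < LL n := by linarith
    have hpow1 : (LL n) ^ ((1:ℝ) - η) * cc η n = (LL n) ^ (-(η/2)) := by
      unfold cc
      rw [← Real.rpow_add hLLpos]
      congr 1
      ring
    have hpow2 : (LL n) ^ ((1:ℝ) - η) ≤ 2 * Real.sqrt n := by
      have hle : (LL n) ^ ((1:ℝ) - η) ≤ LL n := by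
        rcases le_or_gt 0 ((1:ℝ) - η) with h | h
        · calc (LL n) ^ ((1:ℝ) - η) ≤ (LL n) ^ (1:ℝ) :=
              Real.rpow_le_rpow_of_exponent_le hLL1 (by linarith)
            _ = LL n := Real.rpow_one _
        · calc (LL n) ^ ((1:ℝ) - η) ≤ (LL n) ^ (0:ℝ) :=
              Real.rpow_le_rpow_of_exponent_le hLL1 h.le
            _ = 1 := Real.rpow_zero _
            _ ≤ LL n := by linarith
      have hlogle : Real.log n ≤ (n:ℝ) := Real.log_le_self hn0.le
      have : LL n ≤ 2 * Real.sqrt (Real.log n) := log_le_two_sqrt (by linarith)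
      have hsqle : Real.sqrt (Real.log n) ≤ Real.sqrt n := Real.sqrt_le_sqrt hlogle
      linarith
    calc ∑ m ∈ blkF v n, σ m
        ≤ (K * (LL n) ^ ((1:ℝ) - η)) * (2 * cc η n + 2 * Real.exp (-Real.sqrt n)) := by
          apply le_trans hB
          apply mul_le_mul_of_nonneg_left hH
          positivity
      _ = 2*K * ((LL n) ^ ((1:ℝ) - η) * cc η n)
          + 2*K * ((LL n) ^ ((1:ℝ) - η) * Real.exp (-Real.sqrt n)) := by ring
      _ ≤ 2*K * (LL n) ^ (-(η/2)) + 4*K * (Real.sqrt n * Real.exp (-Real.sqrt n)) := by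
          rw [hpow1]
          have h11 : (LL n) ^ ((1:ℝ) - η) * Real.exp (-Real.sqrt n)
              ≤ (2 * Real.sqrt n) * Real.exp (-Real.sqrt n) :=
            mul_le_mul_of_nonneg_right hpow2 (Real.exp_pos _).le
          have h10 := mul_le_mul_of_nonneg_left h11 (by positivity : (0:ℝ) ≤ 2*K)
          linarith [h10]
  · have t1 : Tendsto (fun n : ℕ => (LL n) ^ (-(η/2))) atTop (nhds 0) :=
      (tendsto_rpow_neg_atTop (by linarith)).comp tendsto_LL
    have t2 : Tendsto (fun n : ℕ => Real.sqrt n * Real.exp (-Real.sqrt n)) atTop (nhds 0) := by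
      have h := Real.tendsto_pow_mul_exp_neg_atTop_nhds_zero 1
      simp only [pow_one] at h
      exact h.comp (tendsto_sqrt_atTop.comp tendsto_natCast_atTop_atTop)
    have := (t1.const_mul (2*K)).add (t2.const_mul (4*K))
    simpa using this

lemma ev_vlt {η : ℝ} {v : ℕ → ℝ} (hv : ∀ n : ℕ, v n = Real.exp (lv η n)) :
    ∀ᶠ n : ℕ in atTop, v n < v (n+1) := by
  filter_upwards [ev_delta η, ev_cc η] with n ⟨hd1, hd2⟩ ⟨hcc, hccpos⟩
  rw [hv n, hv (n+1)]
  exact Real.exp_lt_exp.2 (by linarith)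

noncomputable def G (k : ℕ) : ℝ := Real.sqrt (Real.log k)

set_option maxHeartbeats 1000000 in
lemma sum_sigma_atTop {η : ℝ} (hη : 0 < η) {σ : ℕ → ℝ}
    (hσmem : ∀ n, σ n ∈ Set.Ioc (0 : ℝ) 1)
    (hσ : ∀ᶠ n : ℕ in atTop,
      σ n = (Real.log (Real.log (Real.log n))) ^ ((1 : ℝ) - η) / n) :
    Tendsto (fun t : ℕ => ∑ n ∈ Finset.Icc 1 t, σ n) atTop atTop := by
  obtain ⟨q, hq⟩ : ∃ q : ℝ, q = max (η - 1) 1 := ⟨_, rfl⟩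
  have hq1 : 1 ≤ q := hq ▸ le_max_right _ _
  have hq0 : 0 < q := by linarith
  obtain ⟨b, hb⟩ : ∃ b : ℝ, b = min 1 (((2*q) ^ q : ℝ))⁻¹ := ⟨_, rfl⟩
  have h2q : (0:ℝ) < (2*q) ^ q := Real.rpow_pos_of_pos (by linarith) _
  have hb0 : 0 < b := by rw [hb]; positivity
  have hb1 : b ≤ ((2*q:ℝ) ^ q)⁻¹ := hb ▸ min_le_right _ _
  -- eventual lower bound for σ
  have hev : ∀ᶠ n : ℕ in atTop, 2*b*(G (n+1) - G n) ≤ σ n := by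
    filter_upwards [ev_base, ev_steps, hσ] with n ⟨h1, h2, h3, h4⟩
      ⟨hs1, hs2, _, _, _, _⟩ hσn
    have hn0 : (0:ℝ) < n := by
      have : (1:ℝ) ≤ n := by exact_mod_cast h4
      linarith
    have hlogpos : (0:ℝ) < Real.log n := by linarith
    have hGn : G n = Real.sqrt (Real.log n) := rfl
    have hGn1 : G (n+1) = Real.sqrt (Real.log ((n:ℝ)+1)) := by
      unfold G; norm_num
    have hG : Real.sqrt (Real.log n) * Real.sqrt (Real.log n) = Real.log n :=
      Real.mul_self_sqrt hlogpos.le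
    have hG1 : (1:ℝ) ≤ Real.sqrt (Real.log n) := by
      nlinarith [Real.sqrt_nonneg (Real.log n)]
    have hGmono : Real.sqrt (Real.log n) ≤ Real.sqrt (Real.log ((n:ℝ)+1)) :=
      Real.sqrt_le_sqrt hs1
    have hG' : Real.sqrt (Real.log ((n:ℝ)+1)) * Real.sqrt (Real.log ((n:ℝ)+1))
        = Real.log ((n:ℝ)+1) := Real.mul_self_sqrt (by linarith)
    have hSpos : (0:ℝ) < Real.sqrt (Real.log n) := by linarith
    -- G (n+1) - G n ≤ 1/(n * (2 √(log n)))
    have hdiff : Real.sqrt (Real.log ((n:ℝ)+1)) - Real.sqrt (Real.log n)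
        ≤ 1/((n:ℝ)*(2*Real.sqrt (Real.log n))) := by
      have hsum : (0:ℝ) < Real.sqrt (Real.log ((n:ℝ)+1)) + Real.sqrt (Real.log n) := by
        linarith
      have e1 : (Real.sqrt (Real.log ((n:ℝ)+1)) - Real.sqrt (Real.log n))
          * (Real.sqrt (Real.log ((n:ℝ)+1)) + Real.sqrt (Real.log n))
          = Real.log ((n:ℝ)+1) - Real.log n := by nlinarith [hG, hG']
      have e2 : Real.sqrt (Real.log ((n:ℝ)+1)) - Real.sqrt (Real.log n)
          = (Real.log ((n:ℝ)+1) - Real.log n)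
            / (Real.sqrt (Real.log ((n:ℝ)+1)) + Real.sqrt (Real.log n)) := by
        rw [eq_div_iff hsum.ne']; exact e1
      rw [e2]
      have e3 : (Real.log ((n:ℝ)+1) - Real.log n)
            / (Real.sqrt (Real.log ((n:ℝ)+1)) + Real.sqrt (Real.log n))
          ≤ (1/(n:ℝ)) / (2*Real.sqrt (Real.log n)) := by
        apply div_le_div₀ (by positivity) hs2 (by positivity) (by linarith)
      have e4 : (1/(n:ℝ)) / (2*Real.sqrt (Real.log n))
          = 1/((n:ℝ)*(2*Real.sqrt (Real.log n))) := by
        rw [div_div, one_div]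
      linarith
    -- lower bound on the rpow factor
    have hLLL0 : (0:ℝ) < Real.log (Real.log (Real.log n)) := by
      have : LLL n = Real.log (Real.log (Real.log n)) := rfl
      linarith [h3, this ▸ h3]
    have hLLLval : LLL n = Real.log (Real.log (Real.log n)) := rfl
    have hr2 : (Real.log (Real.log (Real.log n))) ^ q
        ≤ (2*q) ^ q * Real.sqrt (Real.log n) := by
      have hLLle : Real.log (Real.log (Real.log n)) ≤ Real.log (Real.log n) := by
        have h2' : (0:ℝ) < Real.log (Real.log n) := by
          have : LL n = Real.log (Real.log n) := rfl
          linarith [this ▸ h2]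
        exact Real.log_le_self h2'.le
      have hLL2q : Real.log (Real.log n) ≤ (Real.log n) ^ ((1:ℝ)/(2*q)) / ((1:ℝ)/(2*q)) :=
        Real.log_le_rpow_div hlogpos.le (by positivity)
      have hdivform : (Real.log n) ^ ((1:ℝ)/(2*q)) / ((1:ℝ)/(2*q))
          = (2*q) * (Real.log n) ^ ((1:ℝ)/(2*q)) := by
        field_simp
      have hbase : Real.log (Real.log (Real.log n))
          ≤ (2*q) * (Real.log n) ^ ((1:ℝ)/(2*q)) := by
        rw [← hdivform]; linarith
      have hbnn : (0:ℝ) ≤ Real.log (Real.log (Real.log n)) := hLLL0.le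
      calc (Real.log (Real.log (Real.log n))) ^ q
          ≤ ((2*q) * (Real.log n) ^ ((1:ℝ)/(2*q))) ^ q :=
            Real.rpow_le_rpow hbnn hbase hq0.le
        _ = (2*q)^q * ((Real.log n) ^ ((1:ℝ)/(2*q))) ^ q :=
            Real.mul_rpow (by linarith) (Real.rpow_nonneg hlogpos.le _)
        _ = (2*q)^q * (Real.log n) ^ ((1:ℝ)/2) := by
            rw [← Real.rpow_mul hlogpos.le]
            have hqq : (1:ℝ)/(2*q) * q = 1/2 := by
              rw [div_mul_eq_mul_div, one_mul, div_eq_div_iff (by positivity) (by norm_num)]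
              ring
            rw [hqq]
        _ = (2*q)^q * Real.sqrt (Real.log n) := by
            rw [Real.sqrt_eq_rpow]
    have hr2' : (0:ℝ) < (Real.log (Real.log (Real.log n))) ^ q :=
      Real.rpow_pos_of_pos hLLL0 q
    have hr3 : ((2*q)^q * Real.sqrt (Real.log n))⁻¹
        ≤ (Real.log (Real.log (Real.log n))) ^ (-q) := by
      rw [Real.rpow_neg hLLL0.le]
      exact inv_anti₀ hr2' hr2
    have hr1 : (Real.log (Real.log (Real.log n))) ^ (-q)
        ≤ (Real.log (Real.log (Real.log n))) ^ ((1:ℝ) - η) := by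
      apply Real.rpow_le_rpow_of_exponent_le (by linarith [hLLLval ▸ h3])
      have := hq ▸ le_max_left (η - 1) 1
      linarith
    have hnum : ((2*q)^q * Real.sqrt (Real.log n))⁻¹
        ≤ (Real.log (Real.log (Real.log n))) ^ ((1:ℝ) - η) := le_trans hr3 hr1
    rw [hσn, hGn, hGn1]
    have step1 : ((2*q)^q * Real.sqrt (Real.log n))⁻¹ / (n:ℝ)
        ≤ (Real.log (Real.log (Real.log n))) ^ ((1:ℝ) - η) / (n:ℝ) :=
      div_le_div_of_nonneg_right hnum hn0.le
    have step2 : 2*b*(Real.sqrt (Real.log ((n:ℝ)+1)) - Real.sqrt (Real.log n))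
        ≤ ((2*q)^q * Real.sqrt (Real.log n))⁻¹ / (n:ℝ) := by
      have hn' : (n:ℝ) ≠ 0 := hn0.ne'
      have hS' : Real.sqrt (Real.log n) ≠ 0 := hSpos.ne'
      calc 2*b*(Real.sqrt (Real.log ((n:ℝ)+1)) - Real.sqrt (Real.log n))
          ≤ 2*b*(1/((n:ℝ)*(2*Real.sqrt (Real.log n)))) :=
            mul_le_mul_of_nonneg_left hdiff (by linarith : (0:ℝ) ≤ 2*b)
        _ = b/((n:ℝ)*Real.sqrt (Real.log n)) := by
            rw [mul_one_div, div_eq_div_iff (by positivity) (by positivity)]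
            ring
        _ ≤ ((2*q)^q * Real.sqrt (Real.log n))⁻¹ / (n:ℝ) := by
            rw [div_le_div_iff₀ (by positivity) hn0, mul_inv]
            calc b * (n:ℝ) ≤ ((2*q)^q)⁻¹ * (n:ℝ) :=
                  mul_le_mul_of_nonneg_right hb1 hn0.le
              _ = ((2*q)^q)⁻¹ * (Real.sqrt (Real.log n))⁻¹
                  * ((n:ℝ) * Real.sqrt (Real.log n)) := by
                  have hz : (Real.sqrt (Real.log n))⁻¹
                      * ((n:ℝ) * Real.sqrt (Real.log n)) = (n:ℝ) := by
                    field_simp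
                  rw [mul_assoc, hz]
    linarith
  -- telescoping lower bound
  obtain ⟨N, hN⟩ := eventually_atTop.1 hev
  obtain ⟨N₁, hN₁⟩ : ∃ N₁ : ℕ, N₁ = max N 1 := ⟨_, rfl⟩
  have hN₁N : N ≤ N₁ := hN₁ ▸ le_max_left _ _
  have hN₁1 : 1 ≤ N₁ := hN₁ ▸ le_max_right _ _
  have hlow : ∀ᶠ t : ℕ in atTop, 2*b*(G (t+1) - G N₁) ≤ ∑ n ∈ Finset.Icc 1 t, σ n := by
    filter_upwards [eventually_ge_atTop N₁] with t ht
    have htel : ∑ n ∈ Finset.Icc N₁ t, (2*b*(G (n+1) - G n)) = 2*b*(G (t+1) - G N₁) := by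
      rw [← Finset.mul_sum, ← Finset.Ico_add_one_right_eq_Icc, Finset.sum_Ico_eq_sum_range]
      simp only [Nat.add_assoc]
      rw [Finset.sum_range_sub (fun i => G (N₁ + i))]
      have h12 : N₁ + (t + 1 - N₁) = t + 1 := by omega
      rw [h12]
      norm_num
    have hterm : ∑ n ∈ Finset.Icc N₁ t, (2*b*(G (n+1) - G n)) ≤ ∑ n ∈ Finset.Icc N₁ t, σ n := by
      apply Finset.sum_le_sum
      intro n hn
      exact hN n (le_trans hN₁N (Finset.mem_Icc.1 hn).1)
    have hsub : ∑ n ∈ Finset.Icc N₁ t, σ n ≤ ∑ n ∈ Finset.Icc 1 t, σ n := by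
      apply Finset.sum_le_sum_of_subset_of_nonneg
      · apply Finset.Icc_subset_Icc_left hN₁1
      · intro m _ _; exact (hσmem m).1.le
    linarith [htel ▸ hterm]
  apply tendsto_atTop_mono' atTop hlow
  have hGt : Tendsto (fun t : ℕ => G (t+1)) atTop atTop :=
    tendsto_sqrt_log.comp (tendsto_add_atTop_nat 1)
  have h1 : Tendsto (fun t : ℕ => G (t+1) - G N₁) atTop atTop :=
    tendsto_atTop_add_const_right atTop (-(G N₁)) hGt |>.congr (fun t => by ring)
  exact h1.const_mul_atTop (by positivity)

lemma key_small {η : ℝ} (hη : 0 < η) {σ : ℕ → ℝ}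
    (hσmem : ∀ n, σ n ∈ Set.Ioc (0 : ℝ) 1)
    (hσ : ∀ᶠ n : ℕ in atTop,
      σ n = (Real.log (Real.log (Real.log n))) ^ ((1 : ℝ) - η) / n)
    {v : ℕ → ℝ} (hv : ∀ n : ℕ, v n = Real.exp (lv η n)) :
    ∀ ε : ℝ, 0 < ε → ∃ d₁ : ℕ, ∀ d : ℕ, d₁ ≤ d → ∀ n : ℕ, d ∈ blockI v n →
      ((∀ n' : ℕ, d ∈ blockI v n' → n' = n) ∧ (∑ m ∈ blkF v n, σ m) ≤ ε ∧
        (∑ m ∈ blkF v (n+1), σ m) ≤ ε) := by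
  intro ε hε
  have hbs := blocksum_tendsto hη hσmem hσ hv
  obtain ⟨N₁, hN₁⟩ := eventually_atTop.1 (hbs.eventually (eventually_le_nhds hε))
  obtain ⟨N₂, hN₂⟩ := eventually_atTop.1 (ev_vlt hv)
  obtain ⟨N, hN⟩ : ∃ N : ℕ, N = max N₁ N₂ := ⟨_, rfl⟩
  have hNN₁ : N₁ ≤ N := hN ▸ le_max_left _ _
  have hNN₂ : N₂ ≤ N := hN ▸ le_max_right _ _
  have hmono : ∀ a c : ℕ, N₂ ≤ a → a ≤ c → v a ≤ v c := by
    intro a c ha hac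
    induction c, hac using Nat.le_induction with
    | base => exact le_refl _
    | succ c hc ih => exact ih.trans (hN₂ c (le_trans ha hc)).le
  refine ⟨((Finset.range (N+2)).sup fun k => ⌈v k⌉₊) + 1, ?_⟩
  intro d hd n hdn
  have hnN : ∀ {n' : ℕ}, d ∈ blockI v n' → N ≤ n' := by
    intro n' hdn'
    by_contra hlt
    push_neg at hlt
    have hmem : n' + 1 ∈ Finset.range (N+2) := Finset.mem_range.2 (by omega)
    have hsup : ⌈v (n'+1)⌉₊ ≤ (Finset.range (N+2)).sup fun k => ⌈v k⌉₊ :=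
      Finset.le_sup (f := fun k => ⌈v k⌉₊) hmem
    have h1 : (d:ℝ) < v (n'+1) := hdn'.2.2
    have h2 : v (n'+1) ≤ (⌈v (n'+1)⌉₊ : ℝ) := Nat.le_ceil _
    have h3 : ⌈v (n'+1)⌉₊ < d := by omega
    have h4 : ((⌈v (n'+1)⌉₊:ℕ):ℝ) < (d:ℝ) := by exact_mod_cast h3
    linarith
  have hNn : N ≤ n := hnN hdn
  refine ⟨?_, hN₁ n (le_trans hNN₁ hNn), hN₁ (n+1) (by omega)⟩
  intro n' hdn'
  have hNn' : N ≤ n' := hnN hdn'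
  by_contra hne
  rcases Nat.lt_or_ge n' n with h | h
  · have h1 : v (n'+1) ≤ v n := hmono (n'+1) n (by omega) (by omega)
    have h2 : v n ≤ (d:ℝ) := hdn.2.1
    have h3 : (d:ℝ) < v (n'+1) := hdn'.2.2
    linarith
  · have h' : n < n' := by omega
    have h1 : v (n+1) ≤ v n' := hmono (n+1) n' (by omega) (by omega)
    have h2 : v n' ≤ (d:ℝ) := hdn'.2.1
    have h3 : (d:ℝ) < v (n+1) := hdn.2.2
    linarith

lemma mem_setD_iff {v : ℕ → ℝ} {A : Set ℕ} {d : ℕ} :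
    d ∈ setD v A ↔ ∃ n : ℕ, d ∈ blockI v n ∧ d ∈ A ∧ ∃ m, m ∈ blockI v (n+1) ∧ m ∈ A := by
  constructor
  · rintro ⟨n, ⟨h1, h2⟩, m, hm1, hm2⟩; exact ⟨n, h1, h2, m, hm1, hm2⟩
  · rintro ⟨n, h1, h2, m, hm1, hm2⟩; exact ⟨n, ⟨h1, h2⟩, m, hm1, hm2⟩

lemma mem_setE_iff {v : ℕ → ℝ} {A : Set ℕ} {m : ℕ} :
    m ∈ setE v A ↔ ∃ n : ℕ, m ∈ blockI v n ∧ m ∈ A ∧ 1 < (blockI v n ∩ A).ncard := by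
  constructor
  · rintro ⟨n, ⟨h1, h2⟩, h3⟩; exact ⟨n, h1, h2, h3⟩
  · rintro ⟨n, h1, h2, h3⟩; exact ⟨n, ⟨h1, h2⟩, h3⟩

section prob
variable {Ω : Type} [MeasurableSpace Ω] (P : Measure Ω) [IsProbabilityMeasure P]
  (Y : ℕ → Ω → Bool)

lemma measD (hYmeas : ∀ n, Measurable (Y n)) (v : ℕ → ℝ) (d : ℕ) :
    MeasurableSet {ω | d ∈ setD v {k | Y k ω = true}} := by
  have hYs : ∀ k, MeasurableSet {ω | Y k ω = true} :=
    fun k => (hYmeas k) (measurableSet_singleton true)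
  have heq : {ω | d ∈ setD v {k | Y k ω = true}}
      = ⋃ n : ℕ, ⋃ (_ : d ∈ blockI v n),
        ({ω | Y d ω = true} ∩ ⋃ m ∈ blkF v (n+1), {ω | Y m ω = true}) := by
    ext ω
    simp only [Set.mem_setOf_eq, mem_setD_iff, Set.mem_iUnion, Set.mem_inter_iff]
    constructor
    · rintro ⟨n, h1, h2, m, hm1, hm2⟩
      exact ⟨n, h1, h2, ⟨m, mem_blkF.2 hm1, hm2⟩⟩
    · rintro ⟨n, h1, h2, m, hm1, hm2⟩
      exact ⟨n, h1, h2, m, mem_blkF.1 hm1, hm2⟩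
  rw [heq]
  exact MeasurableSet.iUnion fun n => MeasurableSet.iUnion fun _ =>
    (hYs d).inter (MeasurableSet.biUnion (blkF v (n+1)).countable_toSet fun m _ => hYs m)

lemma measE (hYmeas : ∀ n, Measurable (Y n)) (v : ℕ → ℝ) (d : ℕ) :
    MeasurableSet {ω | d ∈ setE v {k | Y k ω = true}} := by
  classical
  have hYs : ∀ k, MeasurableSet {ω | Y k ω = true} :=
    fun k => (hYmeas k) (measurableSet_singleton true)
  have heq : {ω | d ∈ setE v {k | Y k ω = true}}
      = ⋃ n : ℕ, ⋃ (_ : d ∈ blockI v n),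
        ({ω | Y d ω = true} ∩ ⋃ (a ∈ blkF v n) (b ∈ blkF v n) (_ : a ≠ b),
          ({ω | Y a ω = true} ∩ {ω | Y b ω = true})) := by
    ext ω
    simp only [Set.mem_setOf_eq, mem_setE_iff, Set.mem_iUnion, Set.mem_inter_iff]
    constructor
    · rintro ⟨n, h1, h2, h3⟩
      have hfin : (blockI v n ∩ {k | Y k ω = true}).Finite :=
        (blockI_finite v n).inter_of_left _
      obtain ⟨a, b, ha, hb, hab⟩ := (Set.one_lt_ncard_iff hfin).1 h3
      exact ⟨n, h1, h2, a, mem_blkF.2 ha.1, b, mem_blkF.2 hb.1, hab, ha.2, hb.2⟩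
    · rintro ⟨n, h1, h2, a, ha, b, hb, hab, hYa, hYb⟩
      refine ⟨n, h1, h2, ?_⟩
      have hfin : (blockI v n ∩ {k | Y k ω = true}).Finite :=
        (blockI_finite v n).inter_of_left _
      exact (Set.one_lt_ncard_iff hfin).2 ⟨a, b, ⟨mem_blkF.1 ha, hYa⟩, ⟨mem_blkF.1 hb, hYb⟩, hab⟩
  rw [heq]
  refine MeasurableSet.iUnion fun n => MeasurableSet.iUnion fun _ => (hYs d).inter ?_
  refine MeasurableSet.biUnion (blkF v n).countable_toSet fun a _ => ?_
  refine MeasurableSet.biUnion (blkF v n).countable_toSet fun b _ => ?_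
  exact MeasurableSet.iUnion fun _ => (hYs a).inter (hYs b)

lemma prob_pair (hYmeas : ∀ n, Measurable (Y n))
    (hindep : ProbabilityTheory.iIndepFun Y P)
    {σ : ℕ → ℝ} (hPY : ∀ n, P {ω | Y n ω = true} = ENNReal.ofReal (σ n))
    {i j : ℕ} (hij : i ≠ j) :
    P ({ω | Y i ω = true} ∩ {ω | Y j ω = true})
      = ENNReal.ofReal (σ i) * ENNReal.ofReal (σ j) := by
  have h := (hindep.indepFun hij).measure_inter_preimage_eq_mul {true} {true}
    (measurableSet_singleton true) (measurableSet_singleton true)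
  have e1 : Y i ⁻¹' {true} = {ω | Y i ω = true} := rfl
  have e2 : Y j ⁻¹' {true} = {ω | Y j ω = true} := rfl
  rw [e1, e2] at h
  rw [h, hPY i, hPY j]

lemma probD_le (hYmeas : ∀ n, Measurable (Y n))
    (hindep : ProbabilityTheory.iIndepFun Y P)
    {σ : ℕ → ℝ} (hσmem : ∀ n, σ n ∈ Set.Ioc (0 : ℝ) 1)
    (hPY : ∀ n, P {ω | Y n ω = true} = ENNReal.ofReal (σ n))
    {v : ℕ → ℝ} {d n : ℕ} (hdn : d ∈ blockI v n)
    (hblock : ∀ m', m' ∈ blockI v (n+1) → ((d:ℝ) < (m':ℝ)))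
    (huniq : ∀ n', d ∈ blockI v n' → n' = n) :
    (P {ω | d ∈ setD v {k | Y k ω = true}}).toReal ≤ σ d * ∑ m ∈ blkF v (n+1), σ m := by
  have hsub : {ω | d ∈ setD v {k | Y k ω = true}}
      ⊆ ⋃ m ∈ blkF v (n+1), ({ω | Y d ω = true} ∩ {ω | Y m ω = true}) := by
    intro ω hω
    obtain ⟨n', h1, h2, m, hm1, hm2⟩ := mem_setD_iff.1 hω
    rw [huniq n' h1] at hm1
    exact Set.mem_biUnion (mem_blkF.2 hm1) ⟨h2, hm2⟩
  have hle : P {ω | d ∈ setD v {k | Y k ω = true}}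
      ≤ ∑ m ∈ blkF v (n+1), P ({ω | Y d ω = true} ∩ {ω | Y m ω = true}) :=
    le_trans (measure_mono hsub) (measure_biUnion_finset_le _ _)
  have hval : ∀ m ∈ blkF v (n+1), P ({ω | Y d ω = true} ∩ {ω | Y m ω = true})
      = ENNReal.ofReal (σ d) * ENNReal.ofReal (σ m) := by
    intro m hm
    have hne : d ≠ m := by
      have := hblock m (mem_blkF.1 hm)
      intro h; rw [h] at this; exact lt_irrefl _ this
    exact prob_pair P Y hYmeas hindep hPY hne
  have hsum : ∑ m ∈ blkF v (n+1), P ({ω | Y d ω = true} ∩ {ω | Y m ω = true})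
      = ENNReal.ofReal (σ d * ∑ m ∈ blkF v (n+1), σ m) := by
    rw [Finset.sum_congr rfl hval, ← Finset.mul_sum,
      ← ENNReal.ofReal_sum_of_nonneg (fun m _ => (hσmem m).1.le),
      ← ENNReal.ofReal_mul (hσmem d).1.le]
  apply ENNReal.toReal_le_of_le_ofReal
  · exact mul_nonneg (hσmem d).1.le (Finset.sum_nonneg fun m _ => (hσmem m).1.le)
  · rw [← hsum]; exact hle

lemma probE_le (hYmeas : ∀ n, Measurable (Y n))
    (hindep : ProbabilityTheory.iIndepFun Y P)
    {σ : ℕ → ℝ} (hσmem : ∀ n, σ n ∈ Set.Ioc (0 : ℝ) 1)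
    (hPY : ∀ n, P {ω | Y n ω = true} = ENNReal.ofReal (σ n))
    {v : ℕ → ℝ} {d n : ℕ} (hdn : d ∈ blockI v n)
    (huniq : ∀ n', d ∈ blockI v n' → n' = n) :
    (P {ω | d ∈ setE v {k | Y k ω = true}}).toReal ≤ σ d * ∑ m ∈ blkF v n, σ m := by
  classical
  have hsub : {ω | d ∈ setE v {k | Y k ω = true}}
      ⊆ ⋃ m ∈ (blkF v n).erase d, ({ω | Y d ω = true} ∩ {ω | Y m ω = true}) := by
    intro ω hω
    obtain ⟨n', h1, h2, h3⟩ := mem_setE_iff.1 hω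
    have hn' : n' = n := huniq n' h1
    subst hn'
    have hfin : (blockI v n' ∩ {k | Y k ω = true}).Finite :=
      (blockI_finite v n').inter_of_left _
    obtain ⟨a, b, ha, hb, hab⟩ := (Set.one_lt_ncard_iff hfin).1 h3
    by_cases had : a = d
    · have hbd : b ≠ d := fun h => hab (by rw [had, h])
      refine Set.mem_biUnion (Finset.mem_erase.2 ⟨hbd, mem_blkF.2 hb.1⟩) ⟨h2, hb.2⟩
    · refine Set.mem_biUnion (Finset.mem_erase.2 ⟨had, mem_blkF.2 ha.1⟩) ⟨h2, ha.2⟩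
  have hle : P {ω | d ∈ setE v {k | Y k ω = true}}
      ≤ ∑ m ∈ (blkF v n).erase d, P ({ω | Y d ω = true} ∩ {ω | Y m ω = true}) :=
    le_trans (measure_mono hsub) (measure_biUnion_finset_le _ _)
  have hval : ∀ m ∈ (blkF v n).erase d, P ({ω | Y d ω = true} ∩ {ω | Y m ω = true})
      = ENNReal.ofReal (σ d) * ENNReal.ofReal (σ m) := by
    intro m hm
    exact prob_pair P Y hYmeas hindep hPY (fun h => (Finset.mem_erase.1 hm).1 h.symm)
  have hsum : ∑ m ∈ (blkF v n).erase d, P ({ω | Y d ω = true} ∩ {ω | Y m ω = true})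
      = ENNReal.ofReal (σ d * ∑ m ∈ (blkF v n).erase d, σ m) := by
    rw [Finset.sum_congr rfl hval, ← Finset.mul_sum,
      ← ENNReal.ofReal_sum_of_nonneg (fun m _ => (hσmem m).1.le),
      ← ENNReal.ofReal_mul (hσmem d).1.le]
  have hmono : σ d * ∑ m ∈ (blkF v n).erase d, σ m ≤ σ d * ∑ m ∈ blkF v n, σ m := by
    apply mul_le_mul_of_nonneg_left _ (hσmem d).1.le
    apply Finset.sum_le_sum_of_subset_of_nonneg (Finset.erase_subset _ _)
    exact fun m _ _ => (hσmem m).1.le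
  have h9 : (P {ω | d ∈ setE v {k | Y k ω = true}}).toReal
      ≤ σ d * ∑ m ∈ (blkF v n).erase d, σ m := by
    apply ENNReal.toReal_le_of_le_ofReal
    · exact mul_nonneg (hσmem d).1.le (Finset.sum_nonneg fun m _ => (hσmem m).1.le)
    · rw [← hsum]; exact hle
  linarith

lemma integral_count (S : Ω → Set ℕ) (t : ℕ)
    (hS : ∀ d, MeasurableSet {ω | d ∈ S ω}) :
    ∫ ω, (count (S ω) t : ℝ) ∂P = ∑ d ∈ Finset.Icc 1 t, (P {ω | d ∈ S ω}).toReal := by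
  classical
  have hrep : ∀ ω : Ω, ((count (S ω) t : ℕ) : ℝ)
      = ∑ d ∈ Finset.Icc 1 t, Set.indicator {ω' | d ∈ S ω'} (fun _ => (1:ℝ)) ω := by
    intro ω
    have hset : S ω ∩ Set.Icc 1 t = ↑((Finset.Icc 1 t).filter (fun d => d ∈ S ω)) := by
      ext d
      simp only [Set.mem_inter_iff, Set.mem_Icc, Finset.coe_filter, Finset.mem_Icc,
        Set.mem_setOf_eq]
      tauto
    have : count (S ω) t = ((Finset.Icc 1 t).filter (fun d => d ∈ S ω)).card := by
      unfold count; rw [hset, Set.ncard_coe_finset]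
    rw [this, Finset.card_filter]
    push_cast
    apply Finset.sum_congr rfl
    intro d _
    rw [Set.indicator_apply]
    simp only [Set.mem_setOf_eq]
  have hfun : (fun ω => ((count (S ω) t : ℕ) : ℝ))
      = fun ω => ∑ d ∈ Finset.Icc 1 t, Set.indicator {ω' | d ∈ S ω'} (fun _ => (1:ℝ)) ω :=
    funext hrep
  rw [hfun, integral_finset_sum]
  · apply Finset.sum_congr rfl
    intro d _
    rw [integral_indicator_const (1:ℝ) (hS d)]
    simp [Measure.real]
  · intro d _
    exact (integrable_const (1:ℝ)).indicator (hS d)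

lemma cesaro {σ a : ℕ → ℝ} (hσpos : ∀ n, 0 < σ n)
    (ha0 : ∀ n, 0 ≤ a n) (ha1 : ∀ n, a n ≤ 1)
    (hdiv : Tendsto (fun t : ℕ => ∑ n ∈ Finset.Icc 1 t, σ n) atTop atTop)
    (hsmall : ∀ ε : ℝ, 0 < ε → ∃ d₁ : ℕ, ∀ d, d₁ ≤ d → a d ≤ ε * σ d) :
    Tendsto (fun t : ℕ => (∑ d ∈ Finset.Icc 1 t, a d) / (∑ n ∈ Finset.Icc 1 t, σ n))
      atTop (nhds 0) := by
  rw [Metric.tendsto_atTop]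
  intro ε hε
  obtain ⟨d₁, hd₁⟩ := hsmall (ε/4) (by linarith)
  obtain ⟨T, hT⟩ := eventually_atTop.1
    (hdiv.eventually_ge_atTop (max 1 ((4*((d₁:ℝ)+1))/ε)))
  refine ⟨T, fun t ht => ?_⟩
  have hS := hT t ht
  have hS1 : (1:ℝ) ≤ ∑ n ∈ Finset.Icc 1 t, σ n := le_trans (le_max_left _ _) hS
  have hS2 : (4*((d₁:ℝ)+1))/ε ≤ ∑ n ∈ Finset.Icc 1 t, σ n := le_trans (le_max_right _ _) hS
  have hSpos : (0:ℝ) < ∑ n ∈ Finset.Icc 1 t, σ n := by linarith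
  have hnum : ∑ d ∈ Finset.Icc 1 t, a d
      ≤ (d₁:ℝ) + (ε/4) * ∑ n ∈ Finset.Icc 1 t, σ n := by
    have step : ∀ d ∈ Finset.Icc 1 t,
        a d ≤ (if d < d₁ then (1:ℝ) else 0) + (ε/4) * σ d := by
      intro d _
      by_cases h : d < d₁
      · simp only [h, if_true]
        have h2 := mul_nonneg (by linarith : (0:ℝ) ≤ ε/4) (hσpos d).le
        linarith [ha1 d]
      · simp only [h, if_false]
        push_neg at h
        have := hd₁ d h
        linarith
    calc ∑ d ∈ Finset.Icc 1 t, a d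
        ≤ ∑ d ∈ Finset.Icc 1 t, ((if d < d₁ then (1:ℝ) else 0) + (ε/4) * σ d) :=
          Finset.sum_le_sum step
      _ = (∑ d ∈ Finset.Icc 1 t, (if d < d₁ then (1:ℝ) else 0))
          + (ε/4) * ∑ n ∈ Finset.Icc 1 t, σ n := by
          rw [Finset.sum_add_distrib, Finset.mul_sum]
      _ ≤ (d₁:ℝ) + (ε/4) * ∑ n ∈ Finset.Icc 1 t, σ n := by
          have hcard : ∑ d ∈ Finset.Icc 1 t, (if d < d₁ then (1:ℝ) else 0) ≤ (d₁:ℝ) := by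
            rw [Finset.sum_boole]
            have hsub : (Finset.Icc 1 t).filter (fun d => d < d₁) ⊆ Finset.Ico 1 d₁ := by
              intro d hd
              rw [Finset.mem_filter, Finset.mem_Icc] at hd
              exact Finset.mem_Ico.2 ⟨hd.1.1, hd.2⟩
            have := Finset.card_le_card hsub
            rw [Nat.card_Ico] at this
            have h8 : ((Finset.Icc 1 t).filter (fun d => d < d₁)).card ≤ d₁ := by omega
            exact_mod_cast h8
          linarith
  have hnn : 0 ≤ ∑ d ∈ Finset.Icc 1 t, a d := Finset.sum_nonneg fun d _ => ha0 d
  rw [Real.dist_eq, sub_zero, abs_of_nonneg (by positivity)]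
  have h1 : (∑ d ∈ Finset.Icc 1 t, a d) / (∑ n ∈ Finset.Icc 1 t, σ n)
      ≤ ((d₁:ℝ) + (ε/4) * ∑ n ∈ Finset.Icc 1 t, σ n) / (∑ n ∈ Finset.Icc 1 t, σ n) :=
    div_le_div_of_nonneg_right hnum hSpos.le
  have h2 : ((d₁:ℝ) + (ε/4) * ∑ n ∈ Finset.Icc 1 t, σ n) / (∑ n ∈ Finset.Icc 1 t, σ n)
      = (d₁:ℝ)/(∑ n ∈ Finset.Icc 1 t, σ n) + ε/4 := by
    rw [add_div, mul_div_assoc, div_self hSpos.ne', mul_one]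
  have h3 : (d₁:ℝ)/(∑ n ∈ Finset.Icc 1 t, σ n) ≤ ε/4 := by
    rw [div_le_iff₀ hSpos]
    have h4 : (ε/4) * ((4*((d₁:ℝ)+1))/ε) ≤ (ε/4) * ∑ n ∈ Finset.Icc 1 t, σ n :=
      mul_le_mul_of_nonneg_left hS2 (by linarith)
    have h5 : (ε/4) * ((4*((d₁:ℝ)+1))/ε) = (d₁:ℝ)+1 := by
      field_simp
    linarith
  linarith

/-- Let `σ n = (log log log n)^{1-η}/n` for large `n` (values in `(0,1]` for small `n`),
`Y n` independent `{0,1}`-valued with `P(Y n = 1) = σ n`, `A^ω = {n : Y n ω = 1}`,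
`v n = e^{n (log log n)^{-1+η/2}}`, and `I n = [v n, v (n+1)) ∩ ℕ`.  With `D^ω`, `E^ω`
as above, the expected counting functions satisfy
`𝔼[D^ω(t)] / ∑_{n ≤ t} σ n → 0` and `𝔼[E^ω(t)] / ∑_{n ≤ t} σ n → 0`. -/
theorem expected_counts_negligible {Ω : Type} [MeasurableSpace Ω]
    (P : Measure Ω) [IsProbabilityMeasure P]
    (η : ℝ) (hη : 0 < η) (σ : ℕ → ℝ)
    (hσmem : ∀ n, σ n ∈ Set.Ioc (0 : ℝ) 1)
    (hσ : ∀ᶠ n : ℕ in atTop,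
      σ n = (Real.log (Real.log (Real.log n))) ^ ((1 : ℝ) - η) / n)
    (Y : ℕ → Ω → Bool) (hYmeas : ∀ n, Measurable (Y n))
    (hindep : ProbabilityTheory.iIndepFun Y P)
    (hPY : ∀ n, P {ω | Y n ω = true} = ENNReal.ofReal (σ n))
    (v : ℕ → ℝ)
    (hv : ∀ n : ℕ, v n = Real.exp ((n : ℝ) * (Real.log (Real.log n)) ^ (-(1 : ℝ) + η / 2))) :
    Tendsto
      (fun t : ℕ =>
        (∫ ω, (count (setD v {n | Y n ω = true}) t : ℝ) ∂P) /
          ∑ n ∈ Finset.Icc 1 t, σ n)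
      atTop (nhds 0) ∧
    Tendsto
      (fun t : ℕ =>
        (∫ ω, (count (setE v {n | Y n ω = true}) t : ℝ) ∂P) /
          ∑ n ∈ Finset.Icc 1 t, σ n)
      atTop (nhds 0) := by
  have hσpos : ∀ n, 0 < σ n := fun n => (hσmem n).1
  have hveq : ∀ n : ℕ, v n = Real.exp (lv η n) := by
    intro n
    unfold lv cc LL
    exact hv n
  have hdiv := sum_sigma_atTop hη hσmem hσ
  have hones : ∀ (S : Set Ω), (P S).toReal ≤ 1 := by
    intro S
    apply ENNReal.toReal_le_of_le_ofReal zero_le_one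
    rw [ENNReal.ofReal_one]
    exact prob_le_one
  constructor
  · -- the D part
    have hmeas : ∀ d, MeasurableSet {ω | d ∈ setD v {k | Y k ω = true}} :=
      measD Y hYmeas v
    have hsmallD : ∀ ε : ℝ, 0 < ε → ∃ d₁ : ℕ, ∀ d, d₁ ≤ d →
        (P {ω | d ∈ setD v {k | Y k ω = true}}).toReal ≤ ε * σ d := by
      intro ε hε
      obtain ⟨d₁, hd₁⟩ := key_small hη hσmem hσ hveq ε hε
      refine ⟨d₁, fun d hd => ?_⟩
      by_cases hex : ∃ n, d ∈ blockI v n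
      · obtain ⟨n, hn⟩ := hex
        obtain ⟨huniq, hs1, hs2⟩ := hd₁ d hd n hn
        have hblock : ∀ m', m' ∈ blockI v (n+1) → ((d:ℝ) < (m':ℝ)) := by
          intro m' hm'
          exact lt_of_lt_of_le hn.2.2 hm'.2.1
        have hb := probD_le P Y hYmeas hindep hσmem hPY hn hblock huniq
        calc (P {ω | d ∈ setD v {k | Y k ω = true}}).toReal
            ≤ σ d * ∑ m ∈ blkF v (n+1), σ m := hb
          _ ≤ σ d * ε := mul_le_mul_of_nonneg_left hs2 (hσpos d).le
          _ = ε * σ d := mul_comm _ _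
      · push_neg at hex
        have hempty : {ω | d ∈ setD v {k | Y k ω = true}} = ∅ := by
          ext ω
          simp only [Set.mem_setOf_eq, Set.mem_empty_iff_false, iff_false]
          intro h
          obtain ⟨n, h1, _⟩ := mem_setD_iff.1 h
          exact hex n h1
        rw [hempty]
        simp only [measure_empty, ENNReal.toReal_zero]
        exact mul_nonneg hε.le (hσpos d).le
    have hten := cesaro hσpos
      (fun d => ENNReal.toReal_nonneg) (fun d => hones _) hdiv hsmallD
    apply hten.congr
    intro t
    rw [integral_count P (fun ω => setD v {k | Y k ω = true}) t hmeas]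
  · -- the E part
    have hmeas : ∀ d, MeasurableSet {ω | d ∈ setE v {k | Y k ω = true}} :=
      measE Y hYmeas v
    have hsmallE : ∀ ε : ℝ, 0 < ε → ∃ d₁ : ℕ, ∀ d, d₁ ≤ d →
        (P {ω | d ∈ setE v {k | Y k ω = true}}).toReal ≤ ε * σ d := by
      intro ε hε
      obtain ⟨d₁, hd₁⟩ := key_small hη hσmem hσ hveq ε hε
      refine ⟨d₁, fun d hd => ?_⟩
      by_cases hex : ∃ n, d ∈ blockI v n
      · obtain ⟨n, hn⟩ := hex
        obtain ⟨huniq, hs1, hs2⟩ := hd₁ d hd n hn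
        have hb := probE_le P Y hYmeas hindep hσmem hPY hn huniq
        calc (P {ω | d ∈ setE v {k | Y k ω = true}}).toReal
            ≤ σ d * ∑ m ∈ blkF v n, σ m := hb
          _ ≤ σ d * ε := mul_le_mul_of_nonneg_left hs1 (hσpos d).le
          _ = ε * σ d := mul_comm _ _
      · push_neg at hex
        have hempty : {ω | d ∈ setE v {k | Y k ω = true}} = ∅ := by
          ext ω
          simp only [Set.mem_setOf_eq, Set.mem_empty_iff_false, iff_false]
          intro h
          obtain ⟨n, h1, _⟩ := mem_setE_iff.1 h
          exact hex n h1
        rw [hempty]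
        simp only [measure_empty, ENNReal.toReal_zero]
        exact mul_nonneg hε.le (hσpos d).le
    have hten := cesaro hσpos
      (fun d => ENNReal.toReal_nonneg) (fun d => hones _) hdiv hsmallE
    apply hten.congr
    intro t
    rw [integral_count P (fun ω => setE v {k | Y k ω = true}) t hmeas]
end prob
end
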